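/- arXiv:2103.00941 — 3 statements merged into one kernel-verified Lean document; each statement's English description precedes it below -/
import Mathlib

section
/- Let G be a Ricci-flat graph with maximum degree at most 4. Then no edge of G lies simultaneously in a cycle of length 3 and a cycle of length 4. -/
open scoped BigOperators

namespace RicciFlatPaper

variable {V : Type*}

/-- Degree of a vertex (as the number of neighbors). -/
noncomputable def deg (G : SimpleGraph V) (v : V) : ℕ := (G.neighborSet v).ncard

/-- A graph is locally finite if every vertex has finitely many neighbors. -/
def LocFin (G : SimpleGraph V) : Prop := ∀ v : V, (G.neighborSet v).Finite

/-- A finitely supported probability distribution on the vertex set. -/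
def IsProbDist (μ : V → ℝ) : Prop :=
  (∀ v, 0 ≤ μ v) ∧ (Function.support μ).Finite ∧ ∑ᶠ v, μ v = 1

/-- A (finitely supported) coupling between two distributions. -/
def IsCoupling (μ₁ μ₂ : V → ℝ) (A : V → V → ℝ) : Prop :=
  (∀ x y, 0 ≤ A x y) ∧ (Function.support fun p : V × V => A p.1 p.2).Finite ∧
  (∀ x, ∑ᶠ y, A x y = μ₁ x) ∧ (∀ y, ∑ᶠ x, A x y = μ₂ y)

/-- Transportation cost of a coupling with respect to the graph distance. -/
noncomputable def cost (G : SimpleGraph V) (A : V → V → ℝ) : ℝ :=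
  ∑ᶠ p : V × V, A p.1 p.2 * (G.dist p.1 p.2 : ℝ)

/-- The transportation (Wasserstein) distance between two distributions. -/
noncomputable def W (G : SimpleGraph V) (μ₁ μ₂ : V → ℝ) : ℝ :=
  sInf {c : ℝ | ∃ A : V → V → ℝ, IsCoupling μ₁ μ₂ A ∧ c = cost G A}

open Classical in
/-- The lazy neighborhood measure `μ_x^α`. -/
noncomputable def mu (G : SimpleGraph V) (α : ℝ) (x : V) : V → ℝ :=
  fun z => if z = x then α else if G.Adj x z then (1 - α) / (deg G x : ℝ) else 0

/-- The `α`-Ollivier–Ricci curvature `k_α(x,y) = 1 - W(μ_x^α, μ_y^α)`. -/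
noncomputable def kIdle (G : SimpleGraph V) (α : ℝ) (x y : V) : ℝ :=
  1 - W G (mu G α x) (mu G α y)

/-- `HasRicci G x y k` means the Lin–Lu–Yau curvature `k(x,y) = lim_{α→1} k_α(x,y)/(1-α)`
exists and equals `k`. -/
def HasRicci (G : SimpleGraph V) (x y : V) (k : ℝ) : Prop :=
  Filter.Tendsto (fun α : ℝ => kIdle G α x y / (1 - α))
    (nhdsWithin (1 : ℝ) (Set.Iio (1 : ℝ))) (nhds k)

/-- A graph is Ricci-flat if the Lin–Lu–Yau curvature vanishes on every edge. -/
def RicciFlat (G : SimpleGraph V) : Prop := ∀ x y : V, G.Adj x y → HasRicci G x y 0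

/-- `f` is 1-Lipschitz with respect to the graph distance. -/
def Lip1 (G : SimpleGraph V) (f : V → ℝ) : Prop :=
  ∀ u v : V, f u - f v ≤ (G.dist u v : ℝ)

/-- The edge `(x,y)` is contained in some cycle of length `n`. -/
def EdgeInCycle (G : SimpleGraph V) (n : ℕ) (x y : V) : Prop :=
  ∃ (u : V) (w : G.Walk u u), w.IsCycle ∧ w.length = n ∧ s(x, y) ∈ w.edges

end RicciFlatPaper

namespace RicciFlatPaper

variable {V : Type*}

open Filter Set Function SimpleGraph

section Infra
variable {G : SimpleGraph V} {u v : V}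

private lemma dist_adj (h : G.Adj u v) : G.dist u v = 1 :=
  SimpleGraph.dist_eq_one_iff_adj.mpr h

private lemma dist_adj_le (h : G.Adj u v) : (G.dist u v : ℝ) ≤ 1 := by
  rw [dist_adj h]; norm_num

end Infra

section MuFacts
variable {G : SimpleGraph V} {α : ℝ} {x : V}

lemma mu_self (G : SimpleGraph V) (α : ℝ) (x : V) : mu G α x x = α := by simp [mu]

lemma mu_of_adj {w : V} (h : G.Adj x w) (α : ℝ) :
    mu G α x w = (1 - α) / (deg G x : ℝ) := by
  have h1 : w ≠ x := h.ne'
  simp [mu, h1, h]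

lemma mu_of_ne {w : V} (h1 : w ≠ x) (h2 : ¬ G.Adj x w) (α : ℝ) : mu G α x w = 0 := by
  simp [mu, h1, h2]

lemma mu_nonneg (h0 : 0 ≤ α) (h1 : α ≤ 1) (w : V) : 0 ≤ mu G α x w := by
  unfold mu
  split_ifs with h h'
  · exact h0
  · have : (0:ℝ) ≤ (deg G x : ℝ) := Nat.cast_nonneg _
    exact div_nonneg (by linarith) this
  · exact le_refl _

lemma mu_support (G : SimpleGraph V) (α : ℝ) (x : V) :
    Function.support (mu G α x) ⊆ insert x (G.neighborSet x) := by
  intro w hw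
  by_cases h1 : w = x
  · exact h1 ▸ Set.mem_insert _ _
  · by_cases h2 : G.Adj x w
    · exact Set.mem_insert_of_mem _ h2
    · exact absurd (mu_of_ne h1 h2 α) hw

lemma deg_eq_card (hx : (G.neighborSet x).Finite) : deg G x = hx.toFinset.card := by
  rw [deg, Set.ncard_eq_toFinset_card _ hx]

lemma mu_total (hx : (G.neighborSet x).Finite) (hne : (G.neighborSet x).Nonempty) :
    ∑ᶠ w, mu G α x w = 1 := by
  classical
  have hxmem : x ∉ hx.toFinset := by simp
  have hsub : Function.support (mu G α x) ⊆ ↑(insert x hx.toFinset) := by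
    intro w hw
    have := mu_support G α x hw
    simpa using this
  rw [finsum_eq_sum_of_support_subset _ hsub, Finset.sum_insert hxmem, mu_self]
  have hcongr : ∀ w ∈ hx.toFinset, mu G α x w = (1 - α) / (deg G x : ℝ) := by
    intro w hw
    exact mu_of_adj (by simpa using hw) α
  rw [Finset.sum_congr rfl hcongr, Finset.sum_const, ← deg_eq_card hx]
  have hdpos : 0 < deg G x := by
    rw [deg]
    exact (Set.ncard_pos hx).mpr hne
  have : (deg G x : ℝ) ≠ 0 := by positivity
  rw [nsmul_eq_mul]
  field_simp
  ring

end MuFacts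

section WFacts
variable {G : SimpleGraph V} {μ₁ μ₂ : V → ℝ}

lemma cost_nonneg {A : V → V → ℝ} (hA : ∀ p q, 0 ≤ A p q) : 0 ≤ cost G A := by
  refine finsum_nonneg fun p => ?_
  exact mul_nonneg (hA _ _) (Nat.cast_nonneg _)

lemma W_le_cost {A : V → V → ℝ} (hA : IsCoupling μ₁ μ₂ A) : W G μ₁ μ₂ ≤ cost G A := by
  refine csInf_le ⟨0, ?_⟩ ⟨A, hA, rfl⟩
  rintro c ⟨B, hB, rfl⟩
  exact cost_nonneg hB.1

lemma kIdle_ge {A : V → V → ℝ} {α : ℝ} {x y : V}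
    (hA : IsCoupling (mu G α x) (mu G α y) A) (c : ℝ) (hc : cost G A ≤ c) :
    1 - c ≤ kIdle G α x y := by
  have := W_le_cost (G := G) hA
  unfold kIdle
  linarith

lemma no_flat {G : SimpleGraph V} {x y : V} (h : HasRicci G x y 0)
    (hb : ∀ α : ℝ, 3/4 < α → α < 1 → (1-α)/4 ≤ kIdle G α x y) : False := by
  have hev : ∀ᶠ α in nhdsWithin (1:ℝ) (Set.Iio 1), (1:ℝ)/4 ≤ kIdle G α x y / (1 - α) := by
    filter_upwards [Ioo_mem_nhdsLT_of_mem (by norm_num : (1:ℝ) ∈ Set.Ioc (3/4 : ℝ) 1)]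
      with α hα
    obtain ⟨h1, h2⟩ := hα
    have hpos : 0 < 1 - α := by linarith
    rw [le_div_iff₀ hpos]
    have := hb α h1 h2
    linarith
  have := ge_of_tendsto h hev
  norm_num at this

end WFacts

section InfDeg
variable {G : SimpleGraph V} {u v : V}

lemma deg_of_infinite (hx : ¬ (G.neighborSet u).Finite) : deg G u = 0 := by
  rw [deg, Set.Infinite.ncard hx]

lemma mu_inf_ne (hx : ¬ (G.neighborSet u).Finite) (α : ℝ) {w : V} (h1 : w ≠ u) :
    mu G α u w = 0 := by
  by_cases h2 : G.Adj u w
  · rw [mu_of_adj h2, deg_of_infinite hx]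
    norm_num
  · exact mu_of_ne h1 h2 α

lemma mu_inf_total (hx : ¬ (G.neighborSet u).Finite) (α : ℝ) :
    ∑ᶠ w, mu G α u w = α := by
  have h := finsum_eq_single (mu G α u) u (fun w hw => mu_inf_ne hx α hw)
  rw [h, mu_self]

lemma coupling_total {μ₁ μ₂ : V → ℝ} {A : V → V → ℝ} (hA : IsCoupling μ₁ μ₂ A)
    (h₁ : (Function.support μ₁).Finite) (h₂ : (Function.support μ₂).Finite) :
    ∑ᶠ w, μ₁ w = ∑ᶠ w, μ₂ w := by
  classical
  obtain ⟨hpos, hsupp, hrow, hcol⟩ := hA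
  set T := hsupp.toFinset with hT
  set F₁ : Finset V := T.image Prod.fst ∪ h₁.toFinset with hF₁
  set F₂ : Finset V := T.image Prod.snd ∪ h₂.toFinset with hF₂
  have hmemT : ∀ {p q : V}, A p q ≠ 0 → (p, q) ∈ T := by
    intro p q h
    simp only [hT, Set.Finite.mem_toFinset]
    exact h
  have e₁ : ∑ᶠ w, μ₁ w = ∑ w ∈ F₁, μ₁ w := by
    refine finsum_eq_sum_of_support_subset _ fun w hw => ?_
    simp only [hF₁, Finset.coe_union, Set.mem_union, Finset.coe_image]
    exact Or.inr (by simpa using hw)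
  have e₂ : ∑ᶠ w, μ₂ w = ∑ w ∈ F₂, μ₂ w := by
    refine finsum_eq_sum_of_support_subset _ fun w hw => ?_
    simp only [hF₂, Finset.coe_union, Set.mem_union, Finset.coe_image]
    exact Or.inr (by simpa using hw)
  have hrow' : ∀ w : V, μ₁ w = ∑ q ∈ F₂, A w q := by
    intro w
    rw [← hrow w]
    refine finsum_eq_sum_of_support_subset _ fun q hq => ?_
    have : (w, q) ∈ T := hmemT hq
    simp only [hF₂, Finset.coe_union, Set.mem_union, Finset.coe_image]
    exact Or.inl ⟨(w, q), by simpa using this, rfl⟩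
  have hcol' : ∀ q : V, μ₂ q = ∑ w ∈ F₁, A w q := by
    intro q
    rw [← hcol q]
    refine finsum_eq_sum_of_support_subset _ fun w hw => ?_
    have : (w, q) ∈ T := hmemT hw
    simp only [hF₁, Finset.coe_union, Set.mem_union, Finset.coe_image]
    exact Or.inl ⟨(w, q), by simpa using this, rfl⟩
  rw [e₁, e₂]
  calc ∑ w ∈ F₁, μ₁ w = ∑ w ∈ F₁, ∑ q ∈ F₂, A w q :=
        Finset.sum_congr rfl fun w _ => hrow' w
    _ = ∑ q ∈ F₂, ∑ w ∈ F₁, A w q := Finset.sum_comm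
    _ = ∑ q ∈ F₂, μ₂ q := Finset.sum_congr rfl fun q _ => (hcol' q).symm

lemma fin_of_adj (hconn : G.Connected) (hflat : RicciFlat G) (h : G.Adj u v) :
    (G.neighborSet u).Finite := by
  classical
  by_contra hu
  by_cases hv : (G.neighborSet v).Finite
  · refine no_flat (hflat u v h) fun α h1 h2 => ?_
    have hW : W G (mu G α u) (mu G α v) = 0 := by
      have hempty : {c : ℝ | ∃ A, IsCoupling (mu G α u) (mu G α v) A ∧ c = cost G A} = ∅ := by
        ext c
        simp only [Set.mem_empty_iff_false, iff_false, Set.mem_setOf_eq, not_exists]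
        rintro A ⟨hA, rfl⟩
        have hs₁ : (Function.support (mu G α u)).Finite := by
          refine Set.Finite.subset (Set.finite_singleton u) fun w hw => ?_
          by_contra hne
          exact hw (mu_inf_ne hu α hne)
        have hs₂ : (Function.support (mu G α v)).Finite :=
          Set.Finite.subset (hv.insert v) (mu_support G α v)
        have := coupling_total hA hs₁ hs₂
        rw [mu_inf_total hu, mu_total hv ⟨u, h.symm⟩] at this
        linarith
      rw [W, hempty, Real.sInf_empty]
    unfold kIdle
    rw [hW]
    linarith
  · refine no_flat (hflat u v h) fun α h1 h2 => ?_
    set A : V → V → ℝ := fun p q => if p = u ∧ q = v then α else 0 with hAdef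
    have hAeq : ∀ p q : V, A p q = if p = u ∧ q = v then α else 0 := fun p q => rfl
    have hAval : A u v = α := by rw [hAeq, if_pos ⟨rfl, rfl⟩]
    have hAz : ∀ {p q : V}, ¬ (p = u ∧ q = v) → A p q = 0 := by
      intro p q hpq
      rw [hAeq, if_neg hpq]
    have hA : IsCoupling (mu G α u) (mu G α v) A := by
      refine ⟨fun p q => ?_, ?_, fun p => ?_, fun q => ?_⟩
      · by_cases hpq : p = u ∧ q = v
        · rw [hAeq, if_pos hpq]; linarith
        · rw [hAz hpq]
      · refine Set.Finite.subset (Set.finite_singleton (u, v)) fun p hp => ?_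
        by_contra hne
        refine hp (hAz fun hpq => hne ?_)
        simp [Prod.ext_iff, hpq.1, hpq.2]
      · by_cases hp : p = u
        · subst hp
          rw [mu_self, finsum_eq_single _ v (fun q hq => hAz fun hpq => hq hpq.2)]
          exact hAval
        · rw [mu_inf_ne hu α hp,
            finsum_eq_zero_of_forall_eq_zero fun q => hAz fun hpq => hp hpq.1]
      · by_cases hq : q = v
        · subst hq
          rw [mu_self, finsum_eq_single _ u (fun p hp => hAz fun hpq => hp hpq.1)]
          exact hAval
        · rw [mu_inf_ne hv α hq,
            finsum_eq_zero_of_forall_eq_zero fun p => hAz fun hpq => hq hpq.2]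
    have hcost : cost G A = α := by
      rw [cost, finsum_eq_single _ (u, v) (fun p hp => ?_)]
      · rw [hAval, dist_adj h]
        norm_num
      · rw [hAz fun hpq => hp (Prod.ext hpq.1 hpq.2), zero_mul]
    have := kIdle_ge hA α (le_of_eq hcost)
    linarith

end InfDeg

/-- Surplus of `mu x` over the pointwise min with `mu y`. -/
noncomputable def sfun (G : SimpleGraph V) (α : ℝ) (x y : V) : V → ℝ :=
  fun w => mu G α x w - min (mu G α x w) (mu G α y w)

/-- Deficit side. -/
noncomputable def dfun (G : SimpleGraph V) (α : ℝ) (x y : V) : V → ℝ :=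
  fun w => mu G α y w - min (mu G α x w) (mu G α y w)

/-- Total surplus mass. -/
noncomputable def Mtot (G : SimpleGraph V) (α : ℝ) (x y : V) : ℝ := ∑ᶠ w, sfun G α x y w

section Core

variable {G : SimpleGraph V} {x y : V} {α : ℝ}

open Classical in
lemma core_coupling (hconn : G.Connected) (hxy : G.Adj x y)
    (hfx : (G.neighborSet x).Finite) (hfy : (G.neighborSet y).Finite)
    (hα1 : 3/4 < α) (hα2 : α < 1)
    (a b : V) (ρ : ℝ) (hρ0 : 0 ≤ ρ)
    (ha : a = x ∨ G.Adj x a) (hb : b = y ∨ G.Adj y b)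
    (hρa : ρ ≤ sfun G α x y a) (hρb : ρ ≤ dfun G α x y b)
    (hρM : ρ < Mtot G α x y) :
    W G (mu G α x) (mu G α y) ≤ ρ * (G.dist a b : ℝ) + 3 * (Mtot G α x y - ρ)
      - (sfun G α x y x - (if x = a then ρ else 0))
      - (dfun G α x y y - (if y = b then ρ else 0)) := by
  classical
  set μ₁ := mu G α x with hμ₁
  set μ₂ := mu G α y with hμ₂
  set m : V → ℝ := fun w => min (μ₁ w) (μ₂ w) with hm
  set s : V → ℝ := sfun G α x y with hs
  set d : V → ℝ := dfun G α x y with hd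
  set M : ℝ := Mtot G α x y with hM
  have hα0 : (0:ℝ) ≤ α := by linarith
  have hα1' : α ≤ 1 := le_of_lt hα2
  have hμ₁0 : ∀ w, 0 ≤ μ₁ w := mu_nonneg hα0 hα1'
  have hμ₂0 : ∀ w, 0 ≤ μ₂ w := mu_nonneg hα0 hα1'
  have hm0 : ∀ w, 0 ≤ m w := fun w => le_min (hμ₁0 w) (hμ₂0 w)
  have hs0 : ∀ w, 0 ≤ s w := fun w => by
    simp only [hs, sfun]
    have : min (μ₁ w) (μ₂ w) ≤ μ₁ w := min_le_left _ _
    simp only [hμ₁, hμ₂] at this ⊢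
    linarith
  have hd0 : ∀ w, 0 ≤ d w := fun w => by
    simp only [hd, dfun]
    have : min (μ₁ w) (μ₂ w) ≤ μ₂ w := min_le_right _ _
    simp only [hμ₁, hμ₂] at this ⊢
    linarith
  set T₁ : Finset V := insert x hfx.toFinset with hT₁
  set T₂ : Finset V := insert y hfy.toFinset with hT₂
  have hT₁mem : ∀ {w : V}, μ₁ w ≠ 0 → w ∈ T₁ := by
    intro w hw
    have := mu_support G α x hw
    simp only [hT₁, Finset.mem_insert, Set.Finite.mem_toFinset]
    simpa using this
  have hT₂mem : ∀ {w : V}, μ₂ w ≠ 0 → w ∈ T₂ := by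
    intro w hw
    have := mu_support G α y hw
    simp only [hT₂, Finset.mem_insert, Set.Finite.mem_toFinset]
    simpa using this
  have hmT₁ : ∀ {w : V}, m w ≠ 0 → w ∈ T₁ := by
    intro w hw
    refine hT₁mem fun h0 => hw ?_
    simp only [hm, h0]
    exact min_eq_left (hμ₂0 w) |>.trans rfl
  have hmT₂ : ∀ {w : V}, m w ≠ 0 → w ∈ T₂ := by
    intro w hw
    refine hT₂mem fun h0 => hw ?_
    simp only [hm, h0]
    rw [min_comm]
    exact min_eq_left (hμ₁0 w) |>.trans rfl
  have hsT₁ : ∀ {w : V}, s w ≠ 0 → w ∈ T₁ := by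
    intro w hw
    refine hT₁mem fun h0 => hw ?_
    simp only [hs, sfun, ← hμ₁, ← hμ₂, h0]
    rw [min_eq_left (hμ₂0 w)]
    ring
  have hdT₂ : ∀ {w : V}, d w ≠ 0 → w ∈ T₂ := by
    intro w hw
    refine hT₂mem fun h0 => hw ?_
    simp only [hd, dfun, ← hμ₁, ← hμ₂, h0]
    rw [min_comm, min_eq_left (hμ₁0 w)]
    ring
  have haT₁ : a ∈ T₁ := by
    rcases ha with h | h
    · simp [hT₁, h]
    · simp [hT₁, Set.Finite.mem_toFinset, h]
  have hbT₂ : b ∈ T₂ := by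
    rcases hb with h | h
    · simp [hT₂, h]
    · simp [hT₂, Set.Finite.mem_toFinset, h]
  have hxT₁ : x ∈ T₁ := by simp [hT₁]
  have hyT₂ : y ∈ T₂ := by simp [hT₂]
  -- decomposition μ = m + s / m + d
  have hμ₁dec : ∀ w, μ₁ w = m w + s w := fun w => by
    simp only [hs, sfun, hm, ← hμ₁, ← hμ₂]; ring
  have hμ₂dec : ∀ w, μ₂ w = m w + d w := fun w => by
    simp only [hd, dfun, hm, ← hμ₁, ← hμ₂]; ring
  -- finiteness of supports
  have hfs : (Function.support s).Finite :=
    Set.Finite.subset (T₁ : Finset V).finite_toSet fun w hw => hsT₁ hw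
  have hfd : (Function.support d).Finite :=
    Set.Finite.subset (T₂ : Finset V).finite_toSet fun w hw => hdT₂ hw
  have hfm : (Function.support m).Finite :=
    Set.Finite.subset (T₁ : Finset V).finite_toSet fun w hw => hmT₁ hw
  -- totals
  have hx_ne : (G.neighborSet x).Nonempty := ⟨y, hxy⟩
  have hy_ne : (G.neighborSet y).Nonempty := ⟨x, hxy.symm⟩
  have hsum₁ : ∑ᶠ w, μ₁ w = 1 := mu_total hfx hx_ne
  have hsum₂ : ∑ᶠ w, μ₂ w = 1 := mu_total hfy hy_ne
  have hsumS : ∑ᶠ w, s w = M := rfl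
  have hsumD : ∑ᶠ w, d w = M := by
    have h1 : ∑ᶠ w, μ₁ w = (∑ᶠ w, m w) + ∑ᶠ w, s w := by
      rw [← finsum_add_distrib hfm hfs]
      exact finsum_congr fun w => hμ₁dec w
    have h2 : ∑ᶠ w, μ₂ w = (∑ᶠ w, m w) + ∑ᶠ w, d w := by
      rw [← finsum_add_distrib hfm hfd]
      exact finsum_congr fun w => hμ₂dec w
    rw [hsum₁] at h1
    rw [hsum₂] at h2
    rw [← hsumS]
    linarith
  -- adjusted surplus/deficit
  set s' : V → ℝ := fun w => s w - if w = a then ρ else 0 with hs'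
  set d' : V → ℝ := fun w => d w - if w = b then ρ else 0 with hd'
  set M' : ℝ := M - ρ with hM'
  have hM'pos : 0 < M' := by simp only [hM']; linarith
  have hM'ne : M' ≠ 0 := ne_of_gt hM'pos
  have hs'0 : ∀ w, 0 ≤ s' w := by
    intro w
    simp only [hs']
    by_cases hw : w = a
    · rw [if_pos hw, hw]; linarith [hρa]
    · rw [if_neg hw]; linarith [hs0 w]
  have hd'0 : ∀ w, 0 ≤ d' w := by
    intro w
    simp only [hd']
    by_cases hw : w = b
    · rw [if_pos hw, hw]; linarith [hρb]
    · rw [if_neg hw]; linarith [hd0 w]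
  have hs'T₁ : ∀ {w : V}, s' w ≠ 0 → w ∈ T₁ := by
    intro w hw
    by_cases hwa : w = a
    · exact hwa ▸ haT₁
    · refine hsT₁ fun h0 => hw ?_
      simp only [hs', h0, if_neg hwa, sub_zero]
  have hd'T₂ : ∀ {w : V}, d' w ≠ 0 → w ∈ T₂ := by
    intro w hw
    by_cases hwb : w = b
    · exact hwb ▸ hbT₂
    · refine hdT₂ fun h0 => hw ?_
      simp only [hd', h0, if_neg hwb, sub_zero]
  have hfs' : (Function.support s').Finite :=
    Set.Finite.subset (T₁ : Finset V).finite_toSet fun w hw => hs'T₁ hw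
  have hfd' : (Function.support d').Finite :=
    Set.Finite.subset (T₂ : Finset V).finite_toSet fun w hw => hd'T₂ hw
  have hsumS' : ∑ᶠ w, s' w = M' := by
    have hδ : (Function.support fun w : V => if w = a then ρ else 0).Finite := by
      refine Set.Finite.subset (Set.finite_singleton a) fun w hw => ?_
      by_contra hne
      exact hw (if_neg hne)
    have h1 : ∑ᶠ w, s w = (∑ᶠ w, s' w) + ∑ᶠ w : V, (if w = a then ρ else 0) := by
      rw [← finsum_add_distrib hfs' hδ]
      refine finsum_congr fun w => ?_
      simp only [hs']; ring
    have h2 : ∑ᶠ w : V, (if w = a then ρ else 0) = ρ := by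
      rw [finsum_eq_single _ a fun w hw => if_neg hw, if_pos rfl]
    rw [hsumS, h2] at h1
    simp only [hM']
    linarith
  have hsumD' : ∑ᶠ w, d' w = M' := by
    have hδ : (Function.support fun w : V => if w = b then ρ else 0).Finite := by
      refine Set.Finite.subset (Set.finite_singleton b) fun w hw => ?_
      by_contra hne
      exact hw (if_neg hne)
    have h1 : ∑ᶠ w, d w = (∑ᶠ w, d' w) + ∑ᶠ w : V, (if w = b then ρ else 0) := by
      rw [← finsum_add_distrib hfd' hδ]
      refine finsum_congr fun w => ?_
      simp only [hd']; ring
    have h2 : ∑ᶠ w : V, (if w = b then ρ else 0) = ρ := by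
      rw [finsum_eq_single _ b fun w hw => if_neg hw, if_pos rfl]
    rw [hsumD, h2] at h1
    simp only [hM']
    linarith

  -- the coupling
  set A : V → V → ℝ := fun w w' =>
    (if w = w' then m w else 0) + (if w = a ∧ w' = b then ρ else 0) + s' w * d' w' / M'
    with hA
  have hA0 : ∀ w w', 0 ≤ A w w' := by
    intro w w'
    simp only [hA]
    have t1 : (0:ℝ) ≤ if w = w' then m w else 0 := by
      split_ifs; exacts [hm0 w, le_refl _]
    have t2 : (0:ℝ) ≤ if w = a ∧ w' = b then ρ else 0 := by
      split_ifs; exacts [hρ0, le_refl _]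
    have t3 : (0:ℝ) ≤ s' w * d' w' / M' :=
      div_nonneg (mul_nonneg (hs'0 w) (hd'0 w')) (le_of_lt hM'pos)
    linarith
  have hAz : ∀ {w w' : V}, w ∉ T₁ ∨ w' ∉ T₂ → A w w' = 0 := by
    intro w w' hw
    have hsw : s' w * d' w' / M' = 0 := by
      rcases hw with h | h
      · have : s' w = 0 := by
          by_contra hc; exact h (hs'T₁ hc)
        rw [this, zero_mul, zero_div]
      · have : d' w' = 0 := by
          by_contra hc; exact h (hd'T₂ hc)
        rw [this, mul_zero, zero_div]
    have hdiag : (if w = w' then m w else 0) = 0 := by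
      split_ifs with hww
      · by_contra hc
        rcases hw with h | h
        · exact h (hmT₁ hc)
        · exact h (hww ▸ hmT₂ hc)
      · rfl
    have hroute : (if w = a ∧ w' = b then ρ else 0) = 0 := by
      split_ifs with hab
      · exfalso
        rcases hw with h | h
        · exact h (hab.1 ▸ haT₁)
        · exact h (hab.2 ▸ hbT₂)
      · rfl
    simp only [hA, hsw, hdiag, hroute]
    ring
  have hAc : IsCoupling μ₁ μ₂ A := by
    refine ⟨hA0, ?_, ?_, ?_⟩
    · refine Set.Finite.subset ((T₁ ×ˢ T₂) : Finset (V × V)).finite_toSet fun p hp => ?_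
      by_contra hc
      by_cases h1 : p.1 ∈ T₁
      · refine hp (hAz (Or.inr fun h2 => hc ?_))
        simp only [Finset.coe_product, Set.mem_prod]
        exact ⟨by simpa using h1, by simpa using h2⟩
      · exact hp (hAz (Or.inl h1))
    · intro w
      have hf1 : (Function.support fun w' => if w = w' then m w else 0).Finite := by
        refine Set.Finite.subset (Set.finite_singleton w) fun w' hw' => ?_
        by_contra hne
        exact hw' (if_neg fun h => hne h.symm)
      have hf2 : (Function.support fun w' : V => if w = a ∧ w' = b then ρ else 0).Finite := by
        refine Set.Finite.subset (Set.finite_singleton b) fun w' hw' => ?_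
        by_contra hne
        exact hw' (if_neg fun h => hne h.2)
      have hf3 : (Function.support fun w' => s' w * d' w' / M').Finite := by
        refine Set.Finite.subset hfd' fun w' hw' => ?_
        by_contra hne
        simp only [Function.mem_support, not_not] at hne
        exact hw' (show s' w * d' w' / M' = 0 by rw [hne, mul_zero, zero_div])
      have hf12 : (Function.support fun w' =>
          (if w = w' then m w else 0) + (if w = a ∧ w' = b then ρ else 0)).Finite := by
        refine Set.Finite.subset (hf1.union hf2) fun w' hw' => ?_
        by_contra hne
        simp only [Set.mem_union, Function.mem_support, not_or, not_not] at hne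
        exact hw' (show (if w = w' then m w else 0) + (if w = a ∧ w' = b then ρ else 0) = 0
          by rw [hne.1, hne.2, add_zero])
      have e1 : ∑ᶠ w', (if w = w' then m w else 0) = m w := by
        rw [finsum_eq_single _ w fun w' hw' => if_neg fun h => hw' h.symm, if_pos rfl]
      have e2 : ∑ᶠ w' : V, (if w = a ∧ w' = b then ρ else 0) = if w = a then ρ else 0 := by
        by_cases hw : w = a
        · rw [if_pos hw,
            finsum_eq_single _ b fun w' hw' => if_neg fun h => hw' h.2, if_pos ⟨hw, rfl⟩]
        · rw [if_neg hw, finsum_eq_zero_of_forall_eq_zero fun w' => if_neg fun h => hw h.1]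
      have e3 : ∑ᶠ w', s' w * d' w' / M' = s' w := by
        have hptw : ∀ w', s' w * d' w' / M' = s' w / M' * d' w' := fun w' => by ring
        rw [finsum_congr hptw, ← mul_finsum d' (s' w / M'), hsumD']
        field_simp
      calc ∑ᶠ w', A w w'
          = ∑ᶠ w', ((if w = w' then m w else 0) + (if w = a ∧ w' = b then ρ else 0)
              + s' w * d' w' / M') := by simp only [hA]
        _ = (∑ᶠ w', ((if w = w' then m w else 0) + (if w = a ∧ w' = b then ρ else 0)))
              + ∑ᶠ w', s' w * d' w' / M' := finsum_add_distrib hf12 hf3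
        _ = ((∑ᶠ w', (if w = w' then m w else 0))
              + ∑ᶠ w' : V, (if w = a ∧ w' = b then ρ else 0))
              + ∑ᶠ w', s' w * d' w' / M' := by rw [finsum_add_distrib hf1 hf2]
        _ = μ₁ w := by
            rw [e1, e2, e3, hμ₁dec w]
            by_cases hw : w = a
            · simp only [hs', if_pos hw]; ring
            · simp only [hs', if_neg hw]; ring
    · intro w'
      have hf1 : (Function.support fun w : V => if w = w' then m w else 0).Finite := by
        refine Set.Finite.subset (Set.finite_singleton w') fun w hw => ?_
        by_contra hne
        exact hw (if_neg hne)
      have hf2 : (Function.support fun w : V => if w = a ∧ w' = b then ρ else 0).Finite := by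
        refine Set.Finite.subset (Set.finite_singleton a) fun w hw => ?_
        by_contra hne
        exact hw (if_neg fun h => hne h.1)
      have hf3 : (Function.support fun w => s' w * d' w' / M').Finite := by
        refine Set.Finite.subset hfs' fun w hw => ?_
        by_contra hne
        simp only [Function.mem_support, not_not] at hne
        exact hw (show s' w * d' w' / M' = 0 by rw [hne, zero_mul, zero_div])
      have hf12 : (Function.support fun w : V =>
          (if w = w' then m w else 0) + (if w = a ∧ w' = b then ρ else 0)).Finite := by
        refine Set.Finite.subset (hf1.union hf2) fun w hw => ?_
        by_contra hne
        simp only [Set.mem_union, Function.mem_support, not_or, not_not] at hne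
        exact hw (show (if w = w' then m w else 0) + (if w = a ∧ w' = b then ρ else 0) = 0
          by rw [hne.1, hne.2, add_zero])
      have e1 : ∑ᶠ w : V, (if w = w' then m w else 0) = m w' := by
        rw [finsum_eq_single _ w' fun w hw => if_neg hw, if_pos rfl]
      have e2 : ∑ᶠ w : V, (if w = a ∧ w' = b then ρ else 0) = if w' = b then ρ else 0 := by
        by_cases hw : w' = b
        · rw [if_pos hw,
            finsum_eq_single _ a fun w hww => if_neg fun h => hww h.1, if_pos ⟨rfl, hw⟩]
        · rw [if_neg hw, finsum_eq_zero_of_forall_eq_zero fun w => if_neg fun h => hw h.2]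
      have e3 : ∑ᶠ w, s' w * d' w' / M' = d' w' := by
        have hptw : ∀ w, s' w * d' w' / M' = d' w' / M' * s' w := fun w => by ring
        rw [finsum_congr hptw, ← mul_finsum s' (d' w' / M'), hsumS']
        field_simp
      calc ∑ᶠ w, A w w'
          = ∑ᶠ w : V, ((if w = w' then m w else 0) + (if w = a ∧ w' = b then ρ else 0)
              + s' w * d' w' / M') := by simp only [hA]
        _ = (∑ᶠ w : V, ((if w = w' then m w else 0) + (if w = a ∧ w' = b then ρ else 0)))
              + ∑ᶠ w, s' w * d' w' / M' := finsum_add_distrib hf12 hf3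
        _ = ((∑ᶠ w : V, (if w = w' then m w else 0))
              + ∑ᶠ w : V, (if w = a ∧ w' = b then ρ else 0))
              + ∑ᶠ w, s' w * d' w' / M' := by rw [finsum_add_distrib hf1 hf2]
        _ = μ₂ w' := by
            rw [e1, e2, e3, hμ₂dec w']
            by_cases hw : w' = b
            · simp only [hd', if_pos hw]; ring
            · simp only [hd', if_neg hw]; ring
  -- cost estimate
  have hS1 : ∑ w ∈ T₁, s' w = M' := by
    rw [← hsumS']
    exact (finsum_eq_sum_of_support_subset _ fun w hw => Finset.mem_coe.mpr (hs'T₁ hw)).symm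
  have hS2 : ∑ w' ∈ T₂, d' w' = M' := by
    rw [← hsumD']
    exact (finsum_eq_sum_of_support_subset _ fun w hw => Finset.mem_coe.mpr (hd'T₂ hw)).symm
  have hdistb : ∀ w ∈ T₁, ∀ w' ∈ T₂, (G.dist w w' : ℝ)
      ≤ 3 - (if w = x then 1 else 0) - (if w' = y then 1 else 0) := by
    intro w hw w' hw'
    have hwx : (G.dist w x : ℝ) ≤ 1 - (if w = x then 1 else 0) := by
      rcases Finset.mem_insert.mp hw with h | h
      · rw [if_pos h, h, SimpleGraph.dist_self]
        norm_num
      · have hadj : G.Adj x w := by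
          have := Set.Finite.mem_toFinset hfx |>.mp h
          exact this
        rw [if_neg hadj.ne', SimpleGraph.dist_comm, dist_adj hadj]
        norm_num
    have hyw' : (G.dist y w' : ℝ) ≤ 1 - (if w' = y then 1 else 0) := by
      rcases Finset.mem_insert.mp hw' with h | h
      · rw [if_pos h, h, SimpleGraph.dist_self]
        norm_num
      · have hadj : G.Adj y w' := by
          have := Set.Finite.mem_toFinset hfy |>.mp h
          exact this
        rw [if_neg hadj.ne', dist_adj hadj]
        norm_num
    have h3 : (G.dist x y : ℝ) = 1 := by rw [dist_adj hxy]; norm_num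
    have t1 : G.dist w w' ≤ G.dist w x + G.dist x w' := hconn.dist_triangle
    have t2 : G.dist x w' ≤ G.dist x y + G.dist y w' := hconn.dist_triangle
    have tt : G.dist w w' ≤ G.dist w x + G.dist x y + G.dist y w' := by omega
    have ttr : (G.dist w w' : ℝ) ≤ (G.dist w x : ℝ) + (G.dist x y : ℝ) + (G.dist y w' : ℝ) := by
      exact_mod_cast tt
    linarith
  have hcost : cost G A ≤ ρ * (G.dist a b : ℝ) + (3 * M' - s' x - d' y) := by
    have hpt : ∀ p : V × V, A p.1 p.2 * (G.dist p.1 p.2 : ℝ)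
        = (if p.1 = a ∧ p.2 = b then ρ else 0) * (G.dist p.1 p.2 : ℝ)
          + s' p.1 * d' p.2 / M' * (G.dist p.1 p.2 : ℝ) := by
      intro p
      simp only [hA]
      by_cases hp : p.1 = p.2
      · have hz : (G.dist p.1 p.2 : ℝ) = 0 := by
          rw [hp, SimpleGraph.dist_self]
          norm_num
        rw [hz]
        ring
      · rw [if_neg hp]
        ring
    have hg2 : (Function.support fun p : V × V =>
        (if p.1 = a ∧ p.2 = b then ρ else 0) * (G.dist p.1 p.2 : ℝ)).Finite := by
      refine Set.Finite.subset (Set.finite_singleton (a, b)) fun p hp => ?_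
      by_contra hne
      have : ¬ (p.1 = a ∧ p.2 = b) := fun h => hne (by
        simp only [Set.mem_singleton_iff]
        exact Prod.ext h.1 h.2)
      exact hp (show (if p.1 = a ∧ p.2 = b then ρ else 0) * (G.dist p.1 p.2 : ℝ) = 0 by
        rw [if_neg this, zero_mul])
    have hg3sub : (Function.support fun p : V × V =>
        s' p.1 * d' p.2 / M' * (G.dist p.1 p.2 : ℝ)) ⊆ ↑(T₁ ×ˢ T₂) := by
      intro p hp
      have hs'p : s' p.1 ≠ 0 := by
        intro h
        exact hp (show s' p.1 * d' p.2 / M' * (G.dist p.1 p.2 : ℝ) = 0 by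
          rw [h, zero_mul, zero_div, zero_mul])
      have hd'p : d' p.2 ≠ 0 := by
        intro h
        exact hp (show s' p.1 * d' p.2 / M' * (G.dist p.1 p.2 : ℝ) = 0 by
          rw [h, mul_zero, zero_div, zero_mul])
      rw [Finset.coe_product]
      exact ⟨by simpa using hs'T₁ hs'p, by simpa using hd'T₂ hd'p⟩
    have hg3 : (Function.support fun p : V × V =>
        s' p.1 * d' p.2 / M' * (G.dist p.1 p.2 : ℝ)).Finite :=
      Set.Finite.subset ((T₁ ×ˢ T₂) : Finset (V × V)).finite_toSet hg3sub
    have hsplit : cost G A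
        = (∑ᶠ p : V × V, (if p.1 = a ∧ p.2 = b then ρ else 0) * (G.dist p.1 p.2 : ℝ))
          + ∑ᶠ p : V × V, s' p.1 * d' p.2 / M' * (G.dist p.1 p.2 : ℝ) := by
      rw [cost, finsum_congr hpt]
      exact finsum_add_distrib hg2 hg3
    have hroute : (∑ᶠ p : V × V, (if p.1 = a ∧ p.2 = b then ρ else 0) * (G.dist p.1 p.2 : ℝ))
        = ρ * (G.dist a b : ℝ) := by
      rw [finsum_eq_single _ (a, b) fun p hp => ?_]
      · rw [if_pos ⟨rfl, rfl⟩]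
      · have : ¬ (p.1 = a ∧ p.2 = b) := fun h => hp (Prod.ext h.1 h.2)
        rw [if_neg this, zero_mul]
    have hprod : (∑ᶠ p : V × V, s' p.1 * d' p.2 / M' * (G.dist p.1 p.2 : ℝ))
        ≤ 3 * M' - s' x - d' y := by
      rw [finsum_eq_sum_of_support_subset _ hg3sub]
      have hbd : ∀ p ∈ T₁ ×ˢ T₂, s' p.1 * d' p.2 / M' * (G.dist p.1 p.2 : ℝ)
          ≤ s' p.1 * d' p.2 / M'
            * (3 - (if p.1 = x then 1 else 0) - (if p.2 = y then 1 else 0)) := by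
        intro p hp
        rw [Finset.mem_product] at hp
        have hc : 0 ≤ s' p.1 * d' p.2 / M' :=
          div_nonneg (mul_nonneg (hs'0 _) (hd'0 _)) (le_of_lt hM'pos)
        exact mul_le_mul_of_nonneg_left (hdistb p.1 hp.1 p.2 hp.2) hc
      refine le_trans (Finset.sum_le_sum hbd) (le_of_eq ?_)
      rw [Finset.sum_product]
      have hinner : ∀ w ∈ T₁, (∑ w' ∈ T₂, s' w * d' w' / M'
            * (3 - (if w = x then 1 else 0) - (if w' = y then 1 else 0)))
          = s' w * (3 - (if w = x then 1 else 0)) - s' w * d' y / M' := by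
        intro w _
        have hrw : ∀ w' : V, s' w * d' w' / M'
              * (3 - (if w = x then 1 else 0) - (if w' = y then 1 else 0))
            = (s' w * (3 - (if w = x then 1 else 0)) / M') * d' w'
              - (s' w / M') * (if w' = y then d' w' else 0) := by
          intro w'
          by_cases h : w' = y
          · rw [if_pos h, if_pos h]; ring
          · rw [if_neg h, if_neg h]; ring
        rw [Finset.sum_congr rfl fun w' _ => hrw w', Finset.sum_sub_distrib,
          ← Finset.mul_sum, ← Finset.mul_sum, Finset.sum_ite_eq' T₂ y d', if_pos hyT₂, hS2]
        field_simp
      rw [Finset.sum_congr rfl hinner]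
      have hrw2 : ∀ w : V, s' w * (3 - (if w = x then 1 else 0)) - s' w * d' y / M'
          = 3 * s' w - (if w = x then s' w else 0) - (d' y / M') * s' w := by
        intro w
        by_cases h : w = x
        · rw [if_pos h, if_pos h]; ring
        · rw [if_neg h, if_neg h]; ring
      rw [Finset.sum_congr rfl fun w _ => hrw2 w, Finset.sum_sub_distrib,
        Finset.sum_sub_distrib, ← Finset.mul_sum, ← Finset.mul_sum,
        Finset.sum_ite_eq' T₁ x s', if_pos hxT₁, hS1]
      field_simp
    rw [hsplit, hroute]
    linarith
  have hWle : W G μ₁ μ₂ ≤ cost G A := W_le_cost hAc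
  have hsx : s' x = s x - (if x = a then ρ else 0) := rfl
  have hdy : d' y = d y - (if y = b then ρ else 0) := rfl
  rw [hsx, hdy] at hcost
  simp only [hM'] at hcost
  linarith

end Core

section Values

variable {G : SimpleGraph V} {x y : V} {α : ℝ}

lemma sfun_nonneg (hα0 : 0 ≤ α) (hα1 : α ≤ 1) (w : V) : 0 ≤ sfun G α x y w := by
  simp only [sfun]
  have := min_le_left (mu G α x w) (mu G α y w)
  linarith

lemma eps_lt (hα1 : 3/4 < α) (hα2 : α < 1) : 0 < 1 - α ∧ 1 - α < 1/4 := by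
  constructor <;> linarith

lemma deg_pos_of_adj (hxy : G.Adj x y) (hfx : (G.neighborSet x).Finite) : 0 < deg G x := by
  rw [deg]
  exact (Set.ncard_pos hfx).mpr ⟨y, hxy⟩

lemma eps_div_le (hα1 : 3/4 < α) (hα2 : α < 1) {n : ℕ} (hn : 0 < n) :
    (1 - α) / (n : ℝ) ≤ 1 - α := by
  have hn' : (1:ℝ) ≤ (n:ℝ) := by exact_mod_cast hn
  have h0 : 0 < 1 - α := by linarith
  rw [div_le_iff₀ (by linarith)]
  nlinarith

lemma sfun_x (hxy : G.Adj x y) (hfy : (G.neighborSet y).Finite)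
    (hα1 : 3/4 < α) (hα2 : α < 1) :
    sfun G α x y x = α - (1 - α) / (deg G y : ℝ) := by
  have hdy : 0 < deg G y := deg_pos_of_adj hxy.symm hfy
  have h1 : mu G α x x = α := mu_self G α x
  have h2 : mu G α y x = (1 - α) / (deg G y : ℝ) := mu_of_adj hxy.symm α
  have hle : (1 - α) / (deg G y : ℝ) ≤ α := le_trans (eps_div_le hα1 hα2 hdy) (by linarith)
  simp only [sfun, h1, h2, min_eq_right hle]

lemma dfun_y (hxy : G.Adj x y) (hfx : (G.neighborSet x).Finite)
    (hα1 : 3/4 < α) (hα2 : α < 1) :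
    dfun G α x y y = α - (1 - α) / (deg G x : ℝ) := by
  have hdx : 0 < deg G x := deg_pos_of_adj hxy hfx
  have h1 : mu G α y y = α := mu_self G α y
  have h2 : mu G α x y = (1 - α) / (deg G x : ℝ) := mu_of_adj hxy α
  have hle : (1 - α) / (deg G x : ℝ) ≤ α := le_trans (eps_div_le hα1 hα2 hdx) (by linarith)
  simp only [dfun, h1, h2, min_eq_left hle]

lemma sfun_le_of_adj (hα1 : 3/4 < α) (hα2 : α < 1) {w : V} (h : G.Adj x w) :
    sfun G α x y w ≤ (1 - α) / (deg G x : ℝ) := by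
  have h1 : mu G α x w = (1 - α) / (deg G x : ℝ) := mu_of_adj h α
  have h2 : 0 ≤ min (mu G α x w) (mu G α y w) :=
    le_min (mu_nonneg (by linarith) (by linarith) w) (mu_nonneg (by linarith) (by linarith) w)
  simp only [sfun]
  linarith [h1, h2]

lemma sfun_common (hα1 : 3/4 < α) (hα2 : α < 1)
    (hfx : (G.neighborSet x).Finite) (hfy : (G.neighborSet y).Finite)
    (hxy : G.Adj x y) (hdeg : deg G y ≤ deg G x)
    {w : V} (h1 : G.Adj x w) (h2 : G.Adj y w) :
    sfun G α x y w = 0 := by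
  have hdy : 0 < deg G y := deg_pos_of_adj hxy.symm hfy
  have e1 : mu G α x w = (1 - α) / (deg G x : ℝ) := mu_of_adj h1 α
  have e2 : mu G α y w = (1 - α) / (deg G y : ℝ) := mu_of_adj h2 α
  have hle : mu G α x w ≤ mu G α y w := by
    rw [e1, e2]
    apply div_le_div_of_nonneg_left (by linarith) (by exact_mod_cast hdy)
    exact_mod_cast hdeg
  simp only [sfun, min_eq_left hle]
  ring

lemma sfun_y (hxy : G.Adj x y) (hfx : (G.neighborSet x).Finite)
    (hα1 : 3/4 < α) (hα2 : α < 1) :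
    sfun G α x y y = 0 := by
  have hdx : 0 < deg G x := deg_pos_of_adj hxy hfx
  have e1 : mu G α x y = (1 - α) / (deg G x : ℝ) := mu_of_adj hxy α
  have e2 : mu G α y y = α := mu_self G α y
  have hle : mu G α x y ≤ mu G α y y := by
    rw [e1, e2]
    exact le_trans (eps_div_le hα1 hα2 hdx) (by linarith)
  simp only [sfun, min_eq_left hle]
  ring

lemma sfun_exclusive (hα1 : 3/4 < α) (hα2 : α < 1)
    {w : V} (h1 : G.Adj x w) (h2 : ¬ G.Adj y w) (h3 : w ≠ y) :
    sfun G α x y w = (1 - α) / (deg G x : ℝ) := by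
  have e1 : mu G α x w = (1 - α) / (deg G x : ℝ) := mu_of_adj h1 α
  have e2 : mu G α y w = 0 := mu_of_ne h3 h2 α
  have h0 : 0 ≤ mu G α x w := mu_nonneg (by linarith) (by linarith) w
  simp only [sfun, e1, e2] at *
  rw [min_eq_right h0]
  ring

lemma dfun_exclusive (hα1 : 3/4 < α) (hα2 : α < 1)
    {w : V} (h1 : G.Adj y w) (h2 : ¬ G.Adj x w) (h3 : w ≠ x) :
    dfun G α x y w = (1 - α) / (deg G y : ℝ) := by
  have e1 : mu G α y w = (1 - α) / (deg G y : ℝ) := mu_of_adj h1 α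
  have e2 : mu G α x w = 0 := mu_of_ne h3 h2 α
  have h0 : 0 ≤ mu G α y w := mu_nonneg (by linarith) (by linarith) w
  simp only [dfun, e1, e2] at *
  rw [min_eq_left h0]
  ring

lemma Mtot_split (hα1 : 3/4 < α) (hα2 : α < 1) (hfx : (G.neighborSet x).Finite) :
    Mtot G α x y = sfun G α x y x + ∑ w ∈ hfx.toFinset, sfun G α x y w := by
  classical
  have hxmem : x ∉ hfx.toFinset := by simp
  have hsub : Function.support (sfun G α x y) ⊆ ↑(insert x hfx.toFinset) := by
    intro w hw
    have hμ : mu G α x w ≠ 0 := by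
      intro h0
      refine hw ?_
      have h2 : 0 ≤ mu G α y w := mu_nonneg (by linarith) (by linarith) w
      simp only [sfun, h0, min_eq_left h2]
      ring
    have := mu_support G α x hμ
    simpa using this
  rw [Mtot, finsum_eq_sum_of_support_subset _ hsub, Finset.sum_insert hxmem]

lemma Mtot_bound (hα1 : 3/4 < α) (hα2 : α < 1)
    (hfx : (G.neighborSet x).Finite) (hfy : (G.neighborSet y).Finite)
    (hxy : G.Adj x y) (hdeg : deg G y ≤ deg G x)
    (Z : Finset V) (hZsub : ∀ w ∈ Z, G.Adj x w)
    (hZ0 : ∀ w ∈ Z, sfun G α x y w = 0) :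
    Mtot G α x y ≤ sfun G α x y x
      + ((deg G x - Z.card : ℕ) : ℝ) * ((1 - α) / (deg G x : ℝ)) := by
  classical
  rw [Mtot_split hα1 hα2 hfx]
  have hZsub' : Z ⊆ hfx.toFinset := fun w hw => by
    simp only [Set.Finite.mem_toFinset]
    exact hZsub w hw
  have hsplit : ∑ w ∈ hfx.toFinset, sfun G α x y w
      = ∑ w ∈ hfx.toFinset \ Z, sfun G α x y w := by
    rw [← Finset.sum_sdiff hZsub']
    rw [Finset.sum_congr rfl fun w hw => hZ0 w hw]
    simp
  have hbound : ∑ w ∈ hfx.toFinset \ Z, sfun G α x y w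
      ≤ ((hfx.toFinset \ Z).card : ℝ) * ((1 - α) / (deg G x : ℝ)) := by
    rw [← nsmul_eq_mul]
    refine Finset.sum_le_card_nsmul _ _ _ fun w hw => ?_
    have : w ∈ hfx.toFinset := (Finset.mem_sdiff.mp hw).1
    exact sfun_le_of_adj hα1 hα2 (by simpa using this)
  have hcard : (hfx.toFinset \ Z).card = deg G x - Z.card := by
    rw [Finset.card_sdiff_of_subset hZsub', deg_eq_card hfx]
  rw [hsplit]
  rw [hcard] at hbound
  linarith

end Values

section MainLemmas

variable {G : SimpleGraph V}

lemma dfun_nonneg {x y : V} {α : ℝ} (hα0 : 0 ≤ α) (hα1 : α ≤ 1) (w : V) :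
    0 ≤ dfun G α x y w := by
  simp only [dfun]
  have := min_le_right (mu G α x w) (mu G α y w)
  linarith

open Classical in
lemma card3 {u v w : V} (h1 : u ≠ v) (h2 : u ≠ w) (h3 : v ≠ w) :
    ({u, v, w} : Finset V).card = 3 := by
  classical
  rw [Finset.card_insert_of_notMem (by simp [h1, h2]),
    Finset.card_insert_of_notMem (by simp [h3]), Finset.card_singleton]

lemma deg_le_of_3subset {x u v w : V} (hfx : (G.neighborSet x).Finite)
    (h1 : G.Adj x u) (h2 : G.Adj x v) (h3 : G.Adj x w)
    (d1 : u ≠ v) (d2 : u ≠ w) (d3 : v ≠ w) : 3 ≤ deg G x := by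
  classical
  have hsub : ({u, v, w} : Finset V) ⊆ hfx.toFinset := by
    intro t ht
    simp only [Finset.mem_insert, Finset.mem_singleton] at ht
    rcases ht with rfl | rfl | rfl <;> simp [h1, h2, h3]
  have := Finset.card_le_card hsub
  rw [card3 d1 d2 d3] at this
  rw [deg_eq_card hfx]
  exact this

lemma Mtot_ge (hxy : G.Adj x y) (hfx : (G.neighborSet x).Finite)
    (hfy : (G.neighborSet y).Finite) {α : ℝ} (hα1 : 3/4 < α) (hα2 : α < 1) :
    1/2 ≤ Mtot G α x y := by
  have h1 : sfun G α x y x = α - (1 - α) / (deg G y : ℝ) := sfun_x hxy hfy hα1 hα2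
  have hdy : 0 < deg G y := deg_pos_of_adj hxy.symm hfy
  have h2 : (1 - α) / (deg G y : ℝ) ≤ 1 - α := eps_div_le hα1 hα2 hdy
  have h3 : ∑ w ∈ hfx.toFinset, sfun G α x y w ≥ 0 :=
    Finset.sum_nonneg fun w _ => sfun_nonneg (by linarith) (by linarith) w
  rw [Mtot_split hα1 hα2 hfx, h1]
  linarith

lemma lemA' (hconn : G.Connected) {x y z₁ z₂ : V} (hxy : G.Adj x y)
    (hfx : (G.neighborSet x).Finite) (hfy : (G.neighborSet y).Finite)
    (hmax : deg G x ≤ 4) (hdeg : deg G y ≤ deg G x)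
    (hz12 : z₁ ≠ z₂) (hxz₁ : G.Adj x z₁) (hyz₁ : G.Adj y z₁)
    (hxz₂ : G.Adj x z₂) (hyz₂ : G.Adj y z₂)
    {α : ℝ} (hα1 : 3/4 < α) (hα2 : α < 1) :
    (1 - α)/4 ≤ kIdle G α x y := by
  classical
  have hdx3 : 3 ≤ deg G x :=
    deg_le_of_3subset hfx hxy hxz₁ hxz₂ hyz₁.ne hyz₂.ne hz12
  have hdy3 : 3 ≤ deg G y :=
    deg_le_of_3subset hfy hxy.symm hyz₁ hyz₂ hxz₁.ne hxz₂.ne hz12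
  have hMge : 1/2 ≤ Mtot G α x y := Mtot_ge hxy hfx hfy hα1 hα2
  have hW := core_coupling hconn hxy hfx hfy hα1 hα2 x y 0 (le_refl 0)
    (Or.inl rfl) (Or.inl rfl) (sfun_nonneg (by linarith) (by linarith) x)
    (dfun_nonneg (by linarith) (by linarith) y) (by linarith)
  simp only [zero_mul, sub_zero, ite_self, zero_add] at hW
  set Z : Finset V := {y, z₁, z₂} with hZ
  have hZcard : Z.card = 3 := card3 hyz₁.ne hyz₂.ne hz12
  have hMb := Mtot_bound hα1 hα2 hfx hfy hxy hdeg Z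
    (fun w hw => by
      simp only [hZ, Finset.mem_insert, Finset.mem_singleton] at hw
      rcases hw with rfl | rfl | rfl
      exacts [hxy, hxz₁, hxz₂])
    (fun w hw => by
      simp only [hZ, Finset.mem_insert, Finset.mem_singleton] at hw
      rcases hw with rfl | rfl | rfl
      exacts [sfun_y hxy hfx hα1 hα2,
        sfun_common hα1 hα2 hfx hfy hxy hdeg hxz₁ hyz₁,
        sfun_common hα1 hα2 hfx hfy hxy hdeg hxz₂ hyz₂])
  rw [hZcard] at hMb
  have hsx : sfun G α x y x = α - (1 - α) / (deg G y : ℝ) := sfun_x hxy hfy hα1 hα2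
  have hdyv : dfun G α x y y = α - (1 - α) / (deg G x : ℝ) := dfun_y hxy hfx hα1 hα2
  unfold kIdle
  have hdx' : deg G x = 3 ∨ deg G x = 4 := by omega
  have hdy' : deg G y = 3 ∨ deg G y = 4 := by omega
  rcases hdx' with hx' | hx' <;> rcases hdy' with hy' | hy'
  · rw [hx'] at hMb hdyv; rw [hy'] at hsx
    norm_num at hMb hsx hdyv
    linarith
  · omega
  · rw [hx'] at hMb hdyv; rw [hy'] at hsx
    norm_num at hMb hsx hdyv
    linarith
  · rw [hx'] at hMb hdyv; rw [hy'] at hsx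
    norm_num at hMb hsx hdyv
    linarith

lemma lemB' (hconn : G.Connected) {x y z a b : V} (hxy : G.Adj x y)
    (hfx : (G.neighborSet x).Finite) (hfy : (G.neighborSet y).Finite)
    (hmax : deg G x ≤ 4) (hdeg : deg G y ≤ deg G x)
    (hxz : G.Adj x z) (hyz : G.Adj y z)
    (hxa : G.Adj x a) (hya : ¬ G.Adj y a) (hay : a ≠ y)
    (hyb : G.Adj y b) (hxb : ¬ G.Adj x b) (hbx : b ≠ x)
    (hab : G.Adj a b)
    {α : ℝ} (hα1 : 3/4 < α) (hα2 : α < 1) :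
    (1 - α)/4 ≤ kIdle G α x y := by
  classical
  have hza : z ≠ a := fun h => hya (h ▸ hyz)
  have hzb : z ≠ b := fun h => hxb (h ▸ hxz)
  have hdx3 : 3 ≤ deg G x :=
    deg_le_of_3subset hfx hxy hxz hxa hyz.ne (Ne.symm hay) hza
  have hdy3 : 3 ≤ deg G y :=
    deg_le_of_3subset hfy hxy.symm hyz hyb hxz.ne (Ne.symm hbx) hzb
  have hdxpos : 0 < deg G x := by omega
  have hdypos : 0 < deg G y := by omega
  have hdxR : (0:ℝ) < (deg G x : ℝ) := by exact_mod_cast hdxpos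
  have hdyR : (0:ℝ) < (deg G y : ℝ) := by exact_mod_cast hdypos
  have hMge : 1/2 ≤ Mtot G α x y := Mtot_ge hxy hfx hfy hα1 hα2
  set ρ : ℝ := (1 - α) / (deg G x : ℝ) with hρ
  have hρ0 : 0 ≤ ρ := div_nonneg (by linarith) (le_of_lt hdxR)
  have hρle : ρ ≤ 1 - α := eps_div_le hα1 hα2 hdxpos
  have hρa : ρ ≤ sfun G α x y a := le_of_eq (sfun_exclusive hα1 hα2 hxa hya hay).symm
  have hρb : ρ ≤ dfun G α x y b := by
    rw [dfun_exclusive hα1 hα2 hyb hxb hbx, hρ]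
    apply div_le_div_of_nonneg_left (by linarith) hdyR
    exact_mod_cast hdeg
  have hρM : ρ < Mtot G α x y := by linarith
  have hW := core_coupling hconn hxy hfx hfy hα1 hα2 a b ρ hρ0
    (Or.inr hxa) (Or.inr hyb) hρa hρb hρM
  rw [if_neg hxa.ne, if_neg hyb.ne, dist_adj hab] at hW
  push_cast at hW
  set Z : Finset V := {y, z} with hZ
  have hZcard : Z.card = 2 := by
    rw [hZ, Finset.card_insert_of_notMem (by simp [hyz.ne]), Finset.card_singleton]
  have hMb := Mtot_bound hα1 hα2 hfx hfy hxy hdeg Z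
    (fun w hw => by
      simp only [hZ, Finset.mem_insert, Finset.mem_singleton] at hw
      rcases hw with rfl | rfl
      exacts [hxy, hxz])
    (fun w hw => by
      simp only [hZ, Finset.mem_insert, Finset.mem_singleton] at hw
      rcases hw with rfl | rfl
      exacts [sfun_y hxy hfx hα1 hα2,
        sfun_common hα1 hα2 hfx hfy hxy hdeg hxz hyz])
  rw [hZcard] at hMb
  have hsx : sfun G α x y x = α - (1 - α) / (deg G y : ℝ) := sfun_x hxy hfy hα1 hα2
  have hdyv : dfun G α x y y = α - (1 - α) / (deg G x : ℝ) := dfun_y hxy hfx hα1 hα2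
  unfold kIdle
  have hdx' : deg G x = 3 ∨ deg G x = 4 := by omega
  have hdy' : deg G y = 3 ∨ deg G y = 4 := by omega
  rcases hdx' with hx' | hx' <;> rcases hdy' with hy' | hy'
  · rw [hx'] at hMb hdyv hρ; rw [hy'] at hsx
    norm_num at hMb hsx hdyv hρ
    rw [hρ] at hW
    linarith
  · omega
  · rw [hx'] at hMb hdyv hρ; rw [hy'] at hsx
    norm_num at hMb hsx hdyv hρ
    rw [hρ] at hW
    linarith
  · rw [hx'] at hMb hdyv hρ; rw [hy'] at hsx
    norm_num at hMb hsx hdyv hρ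
    rw [hρ] at hW
    linarith

lemma lemA (hconn : G.Connected) (hmax : ∀ v, deg G v ≤ 4) (hflat : RicciFlat G)
    {x y z₁ z₂ : V} (hxy : G.Adj x y) (hz12 : z₁ ≠ z₂)
    (h1 : G.Adj x z₁) (h2 : G.Adj y z₁) (h3 : G.Adj x z₂) (h4 : G.Adj y z₂) : False := by
  have hfx := fin_of_adj hconn hflat hxy
  have hfy := fin_of_adj hconn hflat hxy.symm
  rcases le_total (deg G y) (deg G x) with h | h
  · exact no_flat (hflat x y hxy) fun α hα1 hα2 =>
      lemA' hconn hxy hfx hfy (hmax x) h hz12 h1 h2 h3 h4 hα1 hα2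
  · exact no_flat (hflat y x hxy.symm) fun α hα1 hα2 =>
      lemA' hconn hxy.symm hfy hfx (hmax y) h hz12 h2 h1 h4 h3 hα1 hα2

lemma lemB (hconn : G.Connected) (hmax : ∀ v, deg G v ≤ 4) (hflat : RicciFlat G)
    {x y z a b : V} (hxy : G.Adj x y)
    (hxz : G.Adj x z) (hyz : G.Adj y z)
    (hxa : G.Adj x a) (hya : ¬ G.Adj y a) (hay : a ≠ y)
    (hyb : G.Adj y b) (hxb : ¬ G.Adj x b) (hbx : b ≠ x)
    (hab : G.Adj a b) : False := by
  have hfx := fin_of_adj hconn hflat hxy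
  have hfy := fin_of_adj hconn hflat hxy.symm
  rcases le_total (deg G y) (deg G x) with h | h
  · exact no_flat (hflat x y hxy) fun α hα1 hα2 =>
      lemB' hconn hxy hfx hfy (hmax x) h hxz hyz hxa hya hay hyb hxb hbx hab hα1 hα2
  · exact no_flat (hflat y x hxy.symm) fun α hα1 hα2 =>
      lemB' hconn hxy.symm hfy hfx (hmax y) h hyz hxz hyb hxb hbx hxa hya hay hab.symm hα1 hα2

end MainLemmas

section Extraction

variable {G : SimpleGraph V}

lemma triangle_of_C3 {x y : V} (h : EdgeInCycle G 3 x y) :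
    ∃ z, G.Adj x z ∧ G.Adj y z := by
  obtain ⟨u, w, _hcyc, hlen, hmem⟩ := h
  cases w with
  | nil => simp at hlen
  | cons e₁ w₁ =>
    cases w₁ with
    | nil => simp at hlen
    | cons e₂ w₂ =>
      cases w₂ with
      | nil => simp at hlen
      | cons e₃ w₃ =>
        cases w₃ with
        | cons e₄ w₄ => simp [SimpleGraph.Walk.length_cons] at hlen
        | nil =>
          simp only [SimpleGraph.Walk.edges_cons, SimpleGraph.Walk.edges_nil,
            List.mem_cons, List.not_mem_nil, or_false] at hmem
          rcases hmem with h1 | h2 | h3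
          · rw [Sym2.eq_iff] at h1
            rcases h1 with ⟨rfl, rfl⟩ | ⟨rfl, rfl⟩
            · exact ⟨_, e₃.symm, e₂⟩
            · exact ⟨_, e₂, e₃.symm⟩
          · rw [Sym2.eq_iff] at h2
            rcases h2 with ⟨rfl, rfl⟩ | ⟨rfl, rfl⟩
            · exact ⟨_, e₁.symm, e₃⟩
            · exact ⟨_, e₃, e₁.symm⟩
          · rw [Sym2.eq_iff] at h3
            rcases h3 with ⟨rfl, rfl⟩ | ⟨rfl, rfl⟩
            · exact ⟨_, e₂.symm, e₁⟩
            · exact ⟨_, e₁, e₂.symm⟩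

lemma square_of_C4 {x y : V} (h : EdgeInCycle G 4 x y) :
    ∃ p q, G.Adj x p ∧ G.Adj p q ∧ G.Adj q y ∧ p ≠ y ∧ q ≠ x := by
  obtain ⟨u, w, hcyc, hlen, hmem⟩ := h
  cases w with
  | nil => simp at hlen
  | cons e₁ w₁ =>
    cases w₁ with
    | nil => simp at hlen
    | cons e₂ w₂ =>
      cases w₂ with
      | nil => simp at hlen
      | cons e₃ w₃ =>
        cases w₃ with
        | nil => simp at hlen
        | cons e₄ w₄ =>
          cases w₄ with
          | cons e₅ w₅ => simp [SimpleGraph.Walk.length_cons] at hlen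
          | nil =>
            have hnodup := hcyc.support_nodup
            simp only [SimpleGraph.Walk.support_cons, SimpleGraph.Walk.support_nil,
              List.tail_cons, List.nodup_cons, List.mem_cons, List.mem_singleton,
              List.not_mem_nil, or_false, List.nodup_nil, and_true, not_or] at hnodup
            have hce : _ ≠ _ := hnodup.1.2.1
            have hdu : _ ≠ _ := hnodup.2.1.2
            simp only [SimpleGraph.Walk.edges_cons, SimpleGraph.Walk.edges_nil,
              List.mem_cons, List.not_mem_nil, or_false] at hmem
            rcases hmem with h1 | h2 | h3 | h4
            · rw [Sym2.eq_iff] at h1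
              rcases h1 with ⟨rfl, rfl⟩ | ⟨rfl, rfl⟩
              · exact ⟨_, _, e₄.symm, e₃.symm, e₂.symm, hce.symm, hdu⟩
              · exact ⟨_, _, e₂, e₃, e₄, hdu, hce.symm⟩
            · rw [Sym2.eq_iff] at h2
              rcases h2 with ⟨rfl, rfl⟩ | ⟨rfl, rfl⟩
              · exact ⟨_, _, e₁.symm, e₄.symm, e₃.symm, hdu.symm, hce.symm⟩
              · exact ⟨_, _, e₃, e₄, e₁, hce.symm, hdu.symm⟩
            · rw [Sym2.eq_iff] at h3
              rcases h3 with ⟨rfl, rfl⟩ | ⟨rfl, rfl⟩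
              · exact ⟨_, _, e₂.symm, e₁.symm, e₄.symm, hce, hdu.symm⟩
              · exact ⟨_, _, e₄, e₁, e₂, hdu.symm, hce⟩
            · rw [Sym2.eq_iff] at h4
              rcases h4 with ⟨rfl, rfl⟩ | ⟨rfl, rfl⟩
              · exact ⟨_, _, e₃.symm, e₂.symm, e₁.symm, hdu, hce⟩
              · exact ⟨_, _, e₁, e₂, e₃, hce, hdu⟩

end Extraction

/-- in a Ricci-flat graph with max degree ≤ 4 no edge is in both a `C₃`
and a `C₄`. -/
theorem ricciFlat_no_edge_shares_C3_C4 (G : SimpleGraph V) (hG : G.Connected)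
    (hmax : ∀ v : V, deg G v ≤ 4) (hflat : RicciFlat G) :
    ∀ x y : V, G.Adj x y → ¬ (EdgeInCycle G 3 x y ∧ EdgeInCycle G 4 x y) := by
  classical
  rintro x y hxy ⟨h3, h4⟩
  obtain ⟨z, hxz, hyz⟩ := triangle_of_C3 h3
  obtain ⟨p, q, hxp, hpq, hqy, hpy, hqx⟩ := square_of_C4 h4
  by_cases htc : ∃ w₁ w₂ : V, w₁ ≠ w₂ ∧ G.Adj x w₁ ∧ G.Adj y w₁ ∧ G.Adj x w₂ ∧ G.Adj y w₂
  · obtain ⟨w₁, w₂, hne, a1, a2, a3, a4⟩ := htc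
    exact lemA hG hmax hflat hxy hne a1 a2 a3 a4
  · push_neg at htc
    have huniq : ∀ w₁ w₂ : V, G.Adj x w₁ → G.Adj y w₁ → G.Adj x w₂ → G.Adj y w₂ →
        w₁ = w₂ := by
      intro w₁ w₂ a1 a2 a3 a4
      by_contra hne
      exact htc w₁ w₂ hne a1 a2 a3 a4
    by_cases hpy' : G.Adj y p
    · have hpz : p = z := huniq p z hxp hpy' hxz hyz
      by_cases hqx' : G.Adj x q
      · have hqz : q = z := huniq q z hqx' hqy.symm hxz hyz
        exact hpq.ne (hpz.trans hqz.symm)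
      · -- two commons (x and q) for the edge (z, y)
        refine lemA hG hmax hflat (G := G) (x := z) (y := y) hyz.symm
          (show x ≠ q from fun h => hqx h.symm) hxz.symm hxy.symm ?_ hqy.symm
        exact hpz ▸ hpq
    · by_cases hqx' : G.Adj x q
      · have hqz : q = z := huniq q z hqx' hqy.symm hxz hyz
        -- two commons (y and p) for the edge (x, z)
        refine lemA hG hmax hflat (G := G) (x := x) (y := z) hxz
          (show y ≠ p from fun h => hpy h.symm) hxy hyz.symm hxp ?_
        exact hqz ▸ hpq.symm
      · exact lemB hG hmax hflat hxy hxz hyz hxp hpy' hpy hqy.symm hqx' hqx hpq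

end RicciFlatPaper
end

section
/- Consider a graph containing the edge (x,y) with d(x) = 4, d(y) = 2, where x has neighbors y, x₁, x₂, x₃ and y has other neighbor y₁, and the edge (x,y) lies in the 4-cycle x–x₁–y₁–y–x (i.e. d(x₁,y₁) = 1). If additionally d(x₂,y₁) = 3 and d(x₃,y₁) = 3, then W(μ_x^{1/5}, μ_y^{1/5}) = 1, and hence k_{1/5}(x,y) = 0. -/
open scoped BigOperators

namespace RicciFlatPaper

variable {V : Type*}


section AuxLemmas

variable {V : Type*}

lemma coupling_lower_bound (G : SimpleGraph V) {μ₁ μ₂ : V → ℝ} {A : V → V → ℝ}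
    (hA : IsCoupling μ₁ μ₂ A) (f : V → ℝ)
    (hf : ∀ u v, f u - f v ≤ (G.dist u v : ℝ)) :
    (∑ᶠ u, f u * μ₁ u) - ∑ᶠ v, f v * μ₂ v ≤ cost G A := by
  classical
  obtain ⟨hpos, hfin, hrow, hcol⟩ := hA
  set S : Finset (V × V) := hfin.toFinset with hS
  set S₁ : Finset V := S.image Prod.fst with hS1
  set S₂ : Finset V := S.image Prod.snd with hS2
  have hmem : ∀ u v, A u v ≠ 0 → (u, v) ∈ S := fun u v h => hfin.mem_toFinset.2 h
  have hmem1 : ∀ u v, A u v ≠ 0 → u ∈ S₁ := fun u v h =>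
    Finset.mem_image.2 ⟨(u, v), hmem u v h, rfl⟩
  have hmem2 : ∀ u v, A u v ≠ 0 → v ∈ S₂ := fun u v h =>
    Finset.mem_image.2 ⟨(u, v), hmem u v h, rfl⟩
  have hrow' : ∀ u, μ₁ u = ∑ v ∈ S₂, A u v := by
    intro u
    rw [← hrow u]
    exact finsum_eq_finset_sum_of_support_subset _ fun v hv => hmem2 u v hv
  have hcol' : ∀ v, μ₂ v = ∑ u ∈ S₁, A u v := by
    intro v
    rw [← hcol v]
    exact finsum_eq_finset_sum_of_support_subset _ fun u hu => hmem1 u v hu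
  have hμ₁0 : ∀ u ∉ S₁, μ₁ u = 0 := by
    intro u hu
    rw [hrow' u]
    exact Finset.sum_eq_zero fun v _ => by
      by_contra h; exact hu (hmem1 u v h)
  have hμ₂0 : ∀ v ∉ S₂, μ₂ v = 0 := by
    intro v hv
    rw [hcol' v]
    exact Finset.sum_eq_zero fun u _ => by
      by_contra h; exact hv (hmem2 u v h)
  have e1 : ∑ᶠ u, f u * μ₁ u = ∑ p ∈ S₁ ×ˢ S₂, f p.1 * A p.1 p.2 := by
    rw [finsum_eq_finset_sum_of_support_subset _ (s := S₁)
      (fun u hu => by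
        by_contra h
        exact hu (by rw [Function.mem_support] at *; simp [hμ₁0 u h] )),
      Finset.sum_product]
    exact Finset.sum_congr rfl fun u _ => by rw [hrow' u, Finset.mul_sum]
  have e2 : ∑ᶠ v, f v * μ₂ v = ∑ p ∈ S₁ ×ˢ S₂, f p.2 * A p.1 p.2 := by
    rw [finsum_eq_finset_sum_of_support_subset _ (s := S₂)
      (fun v hv => by
        by_contra h
        exact hv (by rw [Function.mem_support] at *; simp [hμ₂0 v h] )),
      Finset.sum_product_right]
    exact Finset.sum_congr rfl fun v _ => by rw [hcol' v, Finset.mul_sum]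
  have e3 : cost G A = ∑ p ∈ S₁ ×ˢ S₂, A p.1 p.2 * (G.dist p.1 p.2 : ℝ) := by
    refine finsum_eq_finset_sum_of_support_subset _ fun p hp => ?_
    have hp' : A p.1 p.2 ≠ 0 := fun h => by simp [h] at hp
    exact Finset.mem_product.2 ⟨hmem1 _ _ hp', hmem2 _ _ hp'⟩
  rw [e1, e2, e3, ← Finset.sum_sub_distrib]
  refine Finset.sum_le_sum fun p _ => ?_
  nlinarith [hf p.1 p.2, hpos p.1 p.2]

end AuxLemmas

set_option maxHeartbeats 2000000

/-- local `(4,2)` configuration with `d(x₁,y₁)=1`, `d(x₂,y₁)=d(x₃,y₁)=3`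
has `W(μ_x^{1/5}, μ_y^{1/5}) = 1`, hence `k_{1/5}(x,y) = 0`. -/
theorem W_eq_one_deg42_config (G : SimpleGraph V) (hG : G.Connected)
    (x y x₁ x₂ x₃ y₁ : V) (hxy : G.Adj x y)
    (hdx : deg G x = 4) (hdy : deg G y = 2)
    (hnx : G.neighborSet x = {y, x₁, x₂, x₃}) (hny : G.neighborSet y = {x, y₁})
    (hnodup : ([x, y, x₁, x₂, x₃, y₁] : List V).Nodup)
    (hC4 : G.Adj x₁ y₁) (h2 : G.dist x₂ y₁ = 3) (h3 : G.dist x₃ y₁ = 3) :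
    W G (mu G (1/5) x) (mu G (1/5) y) = 1 ∧ kIdle G (1/5) x y = 0 := by
  classical
  simp only [List.nodup_cons, List.mem_cons, List.not_mem_nil, or_false, not_or,
    List.nodup_nil, and_true, List.mem_singleton] at hnodup
  obtain ⟨⟨nxy, nxx1, nxx2, nxx3, nxy1⟩, ⟨nyx1, nyx2, nyx3, nyy1⟩,
    ⟨nx1x2, nx1x3, nx1y1⟩, ⟨nx2x3, nx2y1⟩, nx3y1⟩ := hnodup
  have nxy : x ≠ y := nxy
  have nxx1 : x ≠ x₁ := nxx1
  have nxx2 : x ≠ x₂ := nxx2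
  have nxx3 : x ≠ x₃ := nxx3
  have nxy1 : x ≠ y₁ := nxy1
  have nyx1 : y ≠ x₁ := nyx1
  have nyx2 : y ≠ x₂ := nyx2
  have nyx3 : y ≠ x₃ := nyx3
  have nyy1 : y ≠ y₁ := nyy1
  have nx1x2 : x₁ ≠ x₂ := nx1x2
  have nx1x3 : x₁ ≠ x₃ := nx1x3
  have nx1y1 : x₁ ≠ y₁ := nx1y1
  have nx2x3 : x₂ ≠ x₃ := nx2x3
  have nx2y1 : x₂ ≠ y₁ := nx2y1
  have nx3y1 : x₃ ≠ y₁ := nx3y1.1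
  have adjx : ∀ z, G.Adj x z ↔ (z = y ∨ z = x₁ ∨ z = x₂ ∨ z = x₃) := by
    intro z
    rw [← SimpleGraph.mem_neighborSet, hnx]
    simp [Set.mem_insert_iff]
  have adjy : ∀ z, G.Adj y z ↔ (z = x ∨ z = y₁) := by
    intro z
    rw [← SimpleGraph.mem_neighborSet, hny]
    simp [Set.mem_insert_iff]
  have axx1 : G.Adj x x₁ := (adjx x₁).2 (Or.inr (Or.inl rfl))
  have axx2 : G.Adj x x₂ := (adjx x₂).2 (Or.inr (Or.inr (Or.inl rfl)))
  have axx3 : G.Adj x x₃ := (adjx x₃).2 (Or.inr (Or.inr (Or.inr rfl)))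
  have ayy1 : G.Adj y y₁ := (adjy y₁).2 (Or.inr rfl)
  have naxy1 : ¬ G.Adj x y₁ := by
    rw [adjx y₁]
    push_neg
    exact ⟨nyy1.symm, nx1y1.symm, nx2y1.symm, nx3y1.symm⟩
  have dxy : G.dist x y = 1 := SimpleGraph.dist_eq_one_iff_adj.2 hxy
  have dyy1 : G.dist y y₁ = 1 := SimpleGraph.dist_eq_one_iff_adj.2 ayy1
  have dx1y1 : G.dist x₁ y₁ = 1 := SimpleGraph.dist_eq_one_iff_adj.2 hC4
  have dx2x : G.dist x₂ x = 1 := SimpleGraph.dist_eq_one_iff_adj.2 axx2.symm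
  have dxy1 : G.dist x y₁ = 2 := by
    have hle : G.dist x y₁ ≤ 2 := by
      have := hG.dist_triangle (u := x) (v := y) (w := y₁)
      omega
    have h0 : G.dist x y₁ ≠ 0 := fun h => nxy1 (hG.dist_eq_zero_iff.1 h)
    have h1 : G.dist x y₁ ≠ 1 := fun h => naxy1 (SimpleGraph.dist_eq_one_iff_adj.1 h)
    omega
  set μ₁ : V → ℝ := mu G (1/5) x with hμ₁def
  set μ₂ : V → ℝ := mu G (1/5) y with hμ₂def
  have hμ1 : ∀ z, μ₁ z = if z = x then 1/5 else if G.Adj x z then 1/5 else 0 := by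
    intro z
    rw [hμ₁def]
    simp only [mu, hdx]
    split_ifs <;> norm_num
  have hμ2 : ∀ z, μ₂ z = if z = y then 1/5 else if G.Adj y z then 2/5 else 0 := by
    intro z
    rw [hμ₂def]
    simp only [mu, hdy]
    split_ifs <;> norm_num
  have hμ1x : μ₁ x = 1/5 := by rw [hμ1]; simp
  have hμ1y : μ₁ y = 1/5 := by rw [hμ1]; simp [nxy.symm, hxy]
  have hμ1x1 : μ₁ x₁ = 1/5 := by rw [hμ1]; simp [nxx1.symm, axx1]
  have hμ1x2 : μ₁ x₂ = 1/5 := by rw [hμ1]; simp [nxx2.symm, axx2]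
  have hμ1x3 : μ₁ x₃ = 1/5 := by rw [hμ1]; simp [nxx3.symm, axx3]
  have hμ1supp : ∀ z, μ₁ z ≠ 0 → z = x ∨ z = y ∨ z = x₁ ∨ z = x₂ ∨ z = x₃ := by
    intro z hz
    rw [hμ1] at hz
    by_cases h : z = x
    · exact Or.inl h
    · rw [if_neg h] at hz
      by_cases h' : G.Adj x z
      · rcases (adjx z).1 h' with h1 | h1 | h1 | h1 <;> tauto
      · simp [h'] at hz
  have hμ2x : μ₂ x = 2/5 := by rw [hμ2]; simp [nxy, hxy.symm]
  have hμ2y : μ₂ y = 1/5 := by rw [hμ2]; simp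
  have hμ2y1 : μ₂ y₁ = 2/5 := by rw [hμ2]; simp [nyy1.symm, ayy1]
  have hμ2supp : ∀ z, μ₂ z ≠ 0 → z = x ∨ z = y ∨ z = y₁ := by
    intro z hz
    rw [hμ2] at hz
    by_cases h : z = y
    · exact Or.inr (Or.inl h)
    · rw [if_neg h] at hz
      by_cases h' : G.Adj y z
      · rcases (adjy z).1 h' with h1 | h1 <;> tauto
      · simp [h'] at hz
  -- the explicit optimal coupling
  set A : V → V → ℝ := fun u v =>
    (if u = x ∧ v = x then (1:ℝ)/5 else 0) + (if u = y ∧ v = y then 1/5 else 0)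
    + (if u = x₁ ∧ v = y₁ then 1/5 else 0) + (if u = x₂ ∧ v = x then 1/5 else 0)
    + (if u = x₃ ∧ v = y₁ then 1/5 else 0) with hAdef
  have hAval : ∀ u v, A u v =
      (if u = x ∧ v = x then (1:ℝ)/5 else 0) + (if u = y ∧ v = y then 1/5 else 0)
      + (if u = x₁ ∧ v = y₁ then 1/5 else 0) + (if u = x₂ ∧ v = x then 1/5 else 0)
      + (if u = x₃ ∧ v = y₁ then 1/5 else 0) := fun u v => rfl
  have hApos : ∀ u v, 0 ≤ A u v := by
    intro u v
    rw [hAval]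
    split_ifs <;> norm_num
  have hArow : ∀ u v, A u v ≠ 0 → u = x ∨ u = y ∨ u = x₁ ∨ u = x₂ ∨ u = x₃ := by
    intro u v h
    by_contra hc
    push_neg at hc
    obtain ⟨c1, c2, c3, c4, c5⟩ := hc
    apply h
    rw [hAval, if_neg (show ¬(u = x ∧ v = x) from fun hh => c1 hh.1),
      if_neg (show ¬(u = y ∧ v = y) from fun hh => c2 hh.1),
      if_neg (show ¬(u = x₁ ∧ v = y₁) from fun hh => c3 hh.1),
      if_neg (show ¬(u = x₂ ∧ v = x) from fun hh => c4 hh.1),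
      if_neg (show ¬(u = x₃ ∧ v = y₁) from fun hh => c5 hh.1)]
    ring
  have hAcol : ∀ u v, A u v ≠ 0 → v = x ∨ v = y ∨ v = y₁ := by
    intro u v h
    by_contra hc
    push_neg at hc
    obtain ⟨c1, c2, c3⟩ := hc
    apply h
    rw [hAval, if_neg (show ¬(u = x ∧ v = x) from fun hh => c1 hh.2),
      if_neg (show ¬(u = y ∧ v = y) from fun hh => c2 hh.2),
      if_neg (show ¬(u = x₁ ∧ v = y₁) from fun hh => c3 hh.2),
      if_neg (show ¬(u = x₂ ∧ v = x) from fun hh => c1 hh.2),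
      if_neg (show ¬(u = x₃ ∧ v = y₁) from fun hh => c3 hh.2)]
    ring
  have hAfin : (Function.support fun p : V × V => A p.1 p.2).Finite := by
    have h5 : ({x, y, x₁, x₂, x₃} : Set V).Finite := Set.toFinite _
    have h3' : ({x, y, y₁} : Set V).Finite := Set.toFinite _
    refine (h5.prod h3').subset fun p hp => ?_
    rw [Function.mem_support] at hp
    refine Set.mem_prod.2 ⟨?_, ?_⟩
    · rcases hArow _ _ hp with h | h | h | h | h <;> simp [h]
    · rcases hAcol _ _ hp with h | h | h <;> simp [h]
  have hsum3 : ∀ g : V → ℝ, ∑ v ∈ ({x, y, y₁} : Finset V), g v = g x + g y + g y₁ := by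
    intro g
    rw [Finset.sum_insert (by simp [nxy, nxy1]),
      Finset.sum_insert (by simp [nyy1]), Finset.sum_singleton]
    ring
  have hsum5 : ∀ g : V → ℝ,
      ∑ v ∈ ({x, y, x₁, x₂, x₃} : Finset V), g v = g x + g y + g x₁ + g x₂ + g x₃ := by
    intro g
    rw [Finset.sum_insert (by simp [nxy, nxx1, nxx2, nxx3]),
      Finset.sum_insert (by simp [nyx1, nyx2, nyx3]),
      Finset.sum_insert (by simp [nx1x2, nx1x3]),
      Finset.sum_insert (by simp [nx2x3]), Finset.sum_singleton]
    ring
  have hrowA : ∀ u, ∑ᶠ v, A u v = μ₁ u := by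
    intro u
    have hsub : (Function.support fun v => A u v) ⊆ ↑({x, y, y₁} : Finset V) := by
      intro v hv
      rw [Function.mem_support] at hv
      rcases hAcol u v hv with h | h | h <;> simp [h]
    rw [finsum_eq_finset_sum_of_support_subset _ hsub, hsum3]
    by_cases h1 : u = x
    · subst h1
      rw [hμ1x, hAval, hAval, hAval]
      norm_num [nxy, nxx1, nxx2, nxx3, nxy1, nyx1, nyx2, nyx3, nyy1, nx1x2, nx1x3, nx1y1, nx2x3, nx2y1, nx3y1, nxy.symm, nxx1.symm, nxx2.symm, nxx3.symm, nxy1.symm, nyx1.symm, nyx2.symm, nyx3.symm, nyy1.symm, nx1x2.symm, nx1x3.symm, nx1y1.symm, nx2x3.symm, nx2y1.symm, nx3y1.symm]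
    · by_cases h2 : u = y
      · subst h2
        rw [hμ1y, hAval, hAval, hAval]
        norm_num [nxy, nxx1, nxx2, nxx3, nxy1, nyx1, nyx2, nyx3, nyy1, nx1x2, nx1x3, nx1y1, nx2x3, nx2y1, nx3y1, nxy.symm, nxx1.symm, nxx2.symm, nxx3.symm, nxy1.symm, nyx1.symm, nyx2.symm, nyx3.symm, nyy1.symm, nx1x2.symm, nx1x3.symm, nx1y1.symm, nx2x3.symm, nx2y1.symm, nx3y1.symm]
      · by_cases h3 : u = x₁
        · subst h3
          rw [hμ1x1, hAval, hAval, hAval]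
          norm_num [nxy, nxx1, nxx2, nxx3, nxy1, nyx1, nyx2, nyx3, nyy1, nx1x2, nx1x3, nx1y1, nx2x3, nx2y1, nx3y1, nxy.symm, nxx1.symm, nxx2.symm, nxx3.symm, nxy1.symm, nyx1.symm, nyx2.symm, nyx3.symm, nyy1.symm, nx1x2.symm, nx1x3.symm, nx1y1.symm, nx2x3.symm, nx2y1.symm, nx3y1.symm]
        · by_cases h4 : u = x₂
          · subst h4
            rw [hμ1x2, hAval, hAval, hAval]
            norm_num [nxy, nxx1, nxx2, nxx3, nxy1, nyx1, nyx2, nyx3, nyy1, nx1x2, nx1x3, nx1y1, nx2x3, nx2y1, nx3y1, nxy.symm, nxx1.symm, nxx2.symm, nxx3.symm, nxy1.symm, nyx1.symm, nyx2.symm, nyx3.symm, nyy1.symm, nx1x2.symm, nx1x3.symm, nx1y1.symm, nx2x3.symm, nx2y1.symm, nx3y1.symm]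
          · by_cases h5 : u = x₃
            · subst h5
              rw [hμ1x3, hAval, hAval, hAval]
              norm_num [nxy, nxx1, nxx2, nxx3, nxy1, nyx1, nyx2, nyx3, nyy1, nx1x2, nx1x3, nx1y1, nx2x3, nx2y1, nx3y1, nxy.symm, nxx1.symm, nxx2.symm, nxx3.symm, nxy1.symm, nyx1.symm, nyx2.symm, nyx3.symm, nyy1.symm, nx1x2.symm, nx1x3.symm, nx1y1.symm, nx2x3.symm, nx2y1.symm, nx3y1.symm]
            · have hu0 : μ₁ u = 0 := by
                rw [hμ1, if_neg h1, if_neg]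
                intro hadj
                rcases (adjx u).1 hadj with h | h | h | h <;> tauto
              rw [hu0, hAval, hAval, hAval]
              norm_num [h1, h2, h3, h4, h5]
  have hcolA : ∀ v, ∑ᶠ u, A u v = μ₂ v := by
    intro v
    have hsub : (Function.support fun u => A u v) ⊆ ↑({x, y, x₁, x₂, x₃} : Finset V) := by
      intro u hu
      rw [Function.mem_support] at hu
      rcases hArow u v hu with h | h | h | h | h <;> simp [h]
    rw [finsum_eq_finset_sum_of_support_subset _ hsub, hsum5]
    by_cases h1 : v = x
    · subst h1
      rw [hμ2x, hAval, hAval, hAval, hAval, hAval]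
      norm_num [nxy, nxx1, nxx2, nxx3, nxy1, nyx1, nyx2, nyx3, nyy1, nx1x2, nx1x3, nx1y1, nx2x3, nx2y1, nx3y1, nxy.symm, nxx1.symm, nxx2.symm, nxx3.symm, nxy1.symm, nyx1.symm, nyx2.symm, nyx3.symm, nyy1.symm, nx1x2.symm, nx1x3.symm, nx1y1.symm, nx2x3.symm, nx2y1.symm, nx3y1.symm]
    · by_cases h2 : v = y
      · subst h2
        rw [hμ2y, hAval, hAval, hAval, hAval, hAval]
        norm_num [nxy, nxx1, nxx2, nxx3, nxy1, nyx1, nyx2, nyx3, nyy1, nx1x2, nx1x3, nx1y1, nx2x3, nx2y1, nx3y1, nxy.symm, nxx1.symm, nxx2.symm, nxx3.symm, nxy1.symm, nyx1.symm, nyx2.symm, nyx3.symm, nyy1.symm, nx1x2.symm, nx1x3.symm, nx1y1.symm, nx2x3.symm, nx2y1.symm, nx3y1.symm]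
      · by_cases h3 : v = y₁
        · subst h3
          rw [hμ2y1, hAval, hAval, hAval, hAval, hAval]
          norm_num [nxy, nxx1, nxx2, nxx3, nxy1, nyx1, nyx2, nyx3, nyy1, nx1x2, nx1x3, nx1y1, nx2x3, nx2y1, nx3y1, nxy.symm, nxx1.symm, nxx2.symm, nxx3.symm, nxy1.symm, nyx1.symm, nyx2.symm, nyx3.symm, nyy1.symm, nx1x2.symm, nx1x3.symm, nx1y1.symm, nx2x3.symm, nx2y1.symm, nx3y1.symm]
        · have hv0 : μ₂ v = 0 := by
            rw [hμ2, if_neg h2, if_neg]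
            intro hadj
            rcases (adjy v).1 hadj with h | h <;> tauto
          rw [hv0, hAval, hAval, hAval, hAval, hAval]
          norm_num [h1, h2, h3]
  have hcoup : IsCoupling μ₁ μ₂ A := ⟨hApos, hAfin, hrowA, hcolA⟩
  -- cost of the coupling
  have hAxx : A x x = 1/5 := by rw [hAval]; norm_num [nxy, nxx1, nxx2, nxx3, nxy1, nyx1, nyx2, nyx3, nyy1, nx1x2, nx1x3, nx1y1, nx2x3, nx2y1, nx3y1, nxy.symm, nxx1.symm, nxx2.symm, nxx3.symm, nxy1.symm, nyx1.symm, nyx2.symm, nyx3.symm, nyy1.symm, nx1x2.symm, nx1x3.symm, nx1y1.symm, nx2x3.symm, nx2y1.symm, nx3y1.symm]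
  have hAyy : A y y = 1/5 := by rw [hAval]; norm_num [nxy, nxx1, nxx2, nxx3, nxy1, nyx1, nyx2, nyx3, nyy1, nx1x2, nx1x3, nx1y1, nx2x3, nx2y1, nx3y1, nxy.symm, nxx1.symm, nxx2.symm, nxx3.symm, nxy1.symm, nyx1.symm, nyx2.symm, nyx3.symm, nyy1.symm, nx1x2.symm, nx1x3.symm, nx1y1.symm, nx2x3.symm, nx2y1.symm, nx3y1.symm]
  have hAx1y1 : A x₁ y₁ = 1/5 := by
    rw [hAval]; norm_num [nxy, nxx1, nxx2, nxx3, nxy1, nyx1, nyx2, nyx3, nyy1, nx1x2, nx1x3, nx1y1, nx2x3, nx2y1, nx3y1, nxy.symm, nxx1.symm, nxx2.symm, nxx3.symm, nxy1.symm, nyx1.symm, nyx2.symm, nyx3.symm, nyy1.symm, nx1x2.symm, nx1x3.symm, nx1y1.symm, nx2x3.symm, nx2y1.symm, nx3y1.symm]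
  have hAx2x : A x₂ x = 1/5 := by
    rw [hAval]; norm_num [nxy, nxx1, nxx2, nxx3, nxy1, nyx1, nyx2, nyx3, nyy1, nx1x2, nx1x3, nx1y1, nx2x3, nx2y1, nx3y1, nxy.symm, nxx1.symm, nxx2.symm, nxx3.symm, nxy1.symm, nyx1.symm, nyx2.symm, nyx3.symm, nyy1.symm, nx1x2.symm, nx1x3.symm, nx1y1.symm, nx2x3.symm, nx2y1.symm, nx3y1.symm]
  have hAx3y1 : A x₃ y₁ = 1/5 := by
    rw [hAval]; norm_num [nxy, nxx1, nxx2, nxx3, nxy1, nyx1, nyx2, nyx3, nyy1, nx1x2, nx1x3, nx1y1, nx2x3, nx2y1, nx3y1, nxy.symm, nxx1.symm, nxx2.symm, nxx3.symm, nxy1.symm, nyx1.symm, nyx2.symm, nyx3.symm, nyy1.symm, nx1x2.symm, nx1x3.symm, nx1y1.symm, nx2x3.symm, nx2y1.symm, nx3y1.symm]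
  have hcost : cost G A = 1 := by
    have hsub : (Function.support fun p : V × V => A p.1 p.2 * (G.dist p.1 p.2 : ℝ)) ⊆
        ↑(({x, y, x₁, x₂, x₃} : Finset V) ×ˢ ({x, y, y₁} : Finset V)) := by
      intro p hp
      rw [Function.mem_support] at hp
      have hp' : A p.1 p.2 ≠ 0 := fun h => hp (by rw [h]; ring)
      rw [Finset.coe_product]
      refine Set.mem_prod.2 ⟨?_, ?_⟩
      · rcases hArow _ _ hp' with h | h | h | h | h <;> simp [h]
      · rcases hAcol _ _ hp' with h | h | h <;> simp [h]
    rw [cost, finsum_eq_finset_sum_of_support_subset _ hsub, Finset.sum_product]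
    simp only [hsum5, hsum3, hAval]
    norm_num [nxy, nxx1, nxx2, nxx3, nxy1, nyx1, nyx2, nyx3, nyy1, nx1x2, nx1x3, nx1y1, nx2x3, nx2y1, nx3y1, nxy.symm, nxx1.symm, nxx2.symm, nxx3.symm, nxy1.symm, nyx1.symm, nyx2.symm, nyx3.symm, nyy1.symm, nx1x2.symm, nx1x3.symm, nx1y1.symm, nx2x3.symm, nx2y1.symm, nx3y1.symm, SimpleGraph.dist_self, dx1y1, dx2x, h3]
  -- the Lipschitz function for the lower bound
  set f : V → ℝ := fun v => (G.dist v y₁ : ℝ) with hfdef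
  have hLip : ∀ u v, f u - f v ≤ (G.dist u v : ℝ) := by
    intro u v
    have h := hG.dist_triangle (u := u) (v := v) (w := y₁)
    have h' : (G.dist u y₁ : ℝ) ≤ (G.dist u v : ℝ) + (G.dist v y₁ : ℝ) := by
      exact_mod_cast h
    simp only [hfdef]
    linarith
  have hfx : f x = 2 := by simp [hfdef, dxy1]
  have hfy : f y = 1 := by simp [hfdef, dyy1]
  have hfx1 : f x₁ = 1 := by simp [hfdef, dx1y1]
  have hfx2 : f x₂ = 3 := by simp [hfdef, h2]
  have hfx3 : f x₃ = 3 := by simp [hfdef, h3]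
  have hfy1 : f y₁ = 0 := by simp [hfdef]
  have hI1 : ∑ᶠ u, f u * μ₁ u = 2 := by
    have hsub : (Function.support fun u => f u * μ₁ u) ⊆
        ↑({x, y, x₁, x₂, x₃} : Finset V) := by
      intro u hu
      rw [Function.mem_support] at hu
      have : μ₁ u ≠ 0 := fun h => hu (by rw [h]; ring)
      rcases hμ1supp u this with h | h | h | h | h <;> simp [h]
    rw [finsum_eq_finset_sum_of_support_subset _ hsub, hsum5,
      hμ1x, hμ1y, hμ1x1, hμ1x2, hμ1x3, hfx, hfy, hfx1, hfx2, hfx3]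
    norm_num
  have hI2 : ∑ᶠ v, f v * μ₂ v = 1 := by
    have hsub : (Function.support fun v => f v * μ₂ v) ⊆
        ↑({x, y, y₁} : Finset V) := by
      intro v hv
      rw [Function.mem_support] at hv
      have : μ₂ v ≠ 0 := fun h => hv (by rw [h]; ring)
      rcases hμ2supp v this with h | h | h <;> simp [h]
    rw [finsum_eq_finset_sum_of_support_subset _ hsub, hsum3,
      hμ2x, hμ2y, hμ2y1, hfx, hfy, hfy1]
    norm_num
  have hlb : ∀ c ∈ {c : ℝ | ∃ B : V → V → ℝ, IsCoupling μ₁ μ₂ B ∧ c = cost G B},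
      (1 : ℝ) ≤ c := by
    rintro c ⟨B, hB, rfl⟩
    have := coupling_lower_bound G hB f hLip
    rw [hI1, hI2] at this
    linarith
  have hW : W G μ₁ μ₂ = 1 := by
    rw [W]
    refine le_antisymm (csInf_le ⟨1, hlb⟩ ⟨A, hcoup, hcost.symm⟩) (le_csInf ⟨cost G A, A, hcoup, rfl⟩ hlb)
  refine ⟨hW, ?_⟩
  rw [kIdle, ← hμ₁def, ← hμ₂def, hW]
  norm_num


end RicciFlatPaper
end

section
/- Consider a graph containing an edge (x,y) with d(x) = 4, d(y) = 2 such that (x,y) lies in a triangle (there is a common neighbor z of x and y). Then W(μ_x^{1/5}, μ_y^{1/5}) < 1, so k_{1/5}(x,y) > 0, and hence such an edge cannot occur in a Ricci-flat graph. -/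
open scoped BigOperators
set_option maxHeartbeats 1000000

namespace RicciFlatPaper

variable {V : Type*}

open Classical in
noncomputable def mix (l : List (V × V × ℝ)) : V → V → ℝ :=
  fun s t => (l.map (fun q => if s = q.1 ∧ t = q.2.1 then q.2.2 else 0)).sum

open Classical

lemma mix_nil (s t : V) : mix ([] : List (V × V × ℝ)) s t = 0 := rfl

lemma mix_cons (q : V × V × ℝ) (l : List (V × V × ℝ)) (s t : V) :
    mix (q :: l) s t = (if s = q.1 ∧ t = q.2.1 then q.2.2 else 0) + mix l s t := by
  simp [mix]

lemma mix_nonneg {l : List (V × V × ℝ)} (h : ∀ q ∈ l, 0 ≤ q.2.2) (s t : V) :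
    0 ≤ mix l s t := by
  apply List.sum_nonneg
  intro a ha
  simp only [List.mem_map] at ha
  obtain ⟨q, hq, rfl⟩ := ha
  split
  · exact h q hq
  · exact le_refl 0

lemma mix_row_support (l : List (V × V × ℝ)) (s : V) :
    (Function.support fun t => mix l s t) ⊆ ↑(l.map fun q => q.2.1).toFinset := by
  induction l with
  | nil => intro t ht; simp [mix] at ht
  | cons q l ih =>
    intro t ht
    simp only [Function.mem_support, mix_cons] at ht
    simp only [List.map_cons, List.toFinset_cons, Finset.coe_insert, Set.mem_insert_iff]
    by_cases h1 : t = q.2.1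
    · exact Or.inl h1
    · right
      apply ih
      simp only [Function.mem_support]
      intro h2
      simp [h1, h2] at ht

lemma mix_col_support (l : List (V × V × ℝ)) (t : V) :
    (Function.support fun s => mix l s t) ⊆ ↑(l.map fun q => q.1).toFinset := by
  induction l with
  | nil => intro s hs; simp [mix] at hs
  | cons q l ih =>
    intro s hs
    simp only [Function.mem_support, mix_cons] at hs
    simp only [List.map_cons, List.toFinset_cons, Finset.coe_insert, Set.mem_insert_iff]
    by_cases h1 : s = q.1
    · exact Or.inl h1
    · right
      apply ih
      simp only [Function.mem_support]
      intro h2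
      simp [h1, h2] at hs

lemma mix_pair_support (l : List (V × V × ℝ)) :
    (Function.support fun p : V × V => mix l p.1 p.2) ⊆ ↑(l.map fun q => (q.1, q.2.1)).toFinset := by
  induction l with
  | nil => intro p hp; simp [mix] at hp
  | cons q l ih =>
    intro p hp
    simp only [Function.mem_support, mix_cons] at hp
    simp only [List.map_cons, List.toFinset_cons, Finset.coe_insert, Set.mem_insert_iff]
    by_cases h1 : p = (q.1, q.2.1)
    · exact Or.inl h1
    · right
      apply ih
      simp only [Function.mem_support]
      intro h2
      have : ¬(p.1 = q.1 ∧ p.2 = q.2.1) := by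
        intro ⟨ha, hb⟩; exact h1 (Prod.ext ha hb)
      simp [this, h2] at hp

lemma mix_row (l : List (V × V × ℝ)) (s : V) :
    ∑ᶠ t, mix l s t = (l.map fun q => if s = q.1 then q.2.2 else 0).sum := by
  induction l with
  | nil => simp [mix]
  | cons q l ih =>
    have h1 : (Function.support fun t => if s = q.1 ∧ t = q.2.1 then q.2.2 else 0) ⊆ {q.2.1} := by
      intro t ht
      rw [Set.mem_singleton_iff]
      by_contra h
      exact ht (by simp [h])
    have heq : ∑ᶠ t, mix (q :: l) s t
        = (∑ᶠ t, if s = q.1 ∧ t = q.2.1 then q.2.2 else 0) + ∑ᶠ t, mix l s t := by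
      rw [← finsum_add_distrib ((Set.finite_singleton _).subset h1)
        (((l.map fun q => q.2.1).toFinset.finite_toSet).subset (mix_row_support l s))]
      exact finsum_congr fun t => mix_cons q l s t
    rw [heq, ih, finsum_eq_single _ q.2.1 (by intro t ht; simp [ht])]
    simp

lemma mix_col (l : List (V × V × ℝ)) (t : V) :
    ∑ᶠ s, mix l s t = (l.map fun q => if t = q.2.1 then q.2.2 else 0).sum := by
  induction l with
  | nil => simp [mix]
  | cons q l ih =>
    have h1 : (Function.support fun s => if s = q.1 ∧ t = q.2.1 then q.2.2 else 0) ⊆ {q.1} := by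
      intro s hs
      rw [Set.mem_singleton_iff]
      by_contra h
      exact hs (by simp [h])
    have heq : ∑ᶠ s, mix (q :: l) s t
        = (∑ᶠ s, if s = q.1 ∧ t = q.2.1 then q.2.2 else 0) + ∑ᶠ s, mix l s t := by
      rw [← finsum_add_distrib ((Set.finite_singleton _).subset h1)
        (((l.map fun q => q.1).toFinset.finite_toSet).subset (mix_col_support l t))]
      exact finsum_congr fun s => mix_cons q l s t
    rw [heq, ih, finsum_eq_single _ q.1 (by intro s hs; simp [hs])]
    simp

lemma mix_cost (G : SimpleGraph V) (l : List (V × V × ℝ)) :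
    cost G (mix l) = (l.map fun q => q.2.2 * (G.dist q.1 q.2.1 : ℝ)).sum := by
  induction l with
  | nil => simp [cost, mix]
  | cons q l ih =>
    have h1 : (Function.support fun p : V × V =>
        (if p.1 = q.1 ∧ p.2 = q.2.1 then q.2.2 else 0) * (G.dist p.1 p.2 : ℝ)) ⊆ {(q.1, q.2.1)} := by
      intro p hp
      simp only [Function.mem_support] at hp
      by_contra h
      have : ¬(p.1 = q.1 ∧ p.2 = q.2.1) := by
        intro ⟨ha, hb⟩; exact h (Prod.ext ha hb)
      simp [this] at hp
    have h2 : (Function.support fun p : V × V => mix l p.1 p.2 * (G.dist p.1 p.2 : ℝ)) ⊆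
        ↑(l.map fun q => (q.1, q.2.1)).toFinset := by
      intro p hp
      apply mix_pair_support l
      simp only [Function.mem_support] at hp ⊢
      intro h
      simp [h] at hp
    have heq : cost G (mix (q :: l))
        = (∑ᶠ p : V × V, (if p.1 = q.1 ∧ p.2 = q.2.1 then q.2.2 else 0) * (G.dist p.1 p.2 : ℝ))
          + cost G (mix l) := by
      rw [cost, cost, ← finsum_add_distrib ((Set.finite_singleton _).subset h1)
        (((l.map fun q => (q.1, q.2.1)).toFinset.finite_toSet).subset h2)]
      apply finsum_congr
      intro p
      rw [mix_cons, add_mul]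
    rw [heq, ih, finsum_eq_single _ (q.1, q.2.1) (by
      intro p hp
      have : ¬(p.1 = q.1 ∧ p.2 = q.2.1) := by
        intro ⟨ha, hb⟩; exact hp (Prod.ext ha hb)
      simp [this])]
    simp

lemma W_le_key (G : SimpleGraph V) (hG : G.Connected) (hlf : LocFin G)
    (x y z : V) (hxy : G.Adj x y) (hdx : deg G x = 4) (hdy : deg G y = 2)
    (hxz : G.Adj x z) (hyz : G.Adj y z) {α : ℝ} (hα1 : 1/5 ≤ α) (hα2 : α ≤ 1) :
    W G (mu G α x) (mu G α y) ≤ 1 - (1 - α)/2 := by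
  classical
  have hyx : y ≠ x := hxy.ne'
  have hzx : z ≠ x := hxz.ne'
  have hzy : z ≠ y := hyz.ne'
  have hy : y ∈ (hlf x).toFinset := by simp [(hlf x).mem_toFinset, hxy]
  have hz : z ∈ ((hlf x).toFinset.erase y) :=
    Finset.mem_erase.mpr ⟨hzy, by simp [(hlf x).mem_toFinset, hxz]⟩
  have hcardx : (hlf x).toFinset.card = 4 := by
    rw [← Set.ncard_eq_toFinset_card _ (hlf x)]; exact hdx
  have hcard2 : (((hlf x).toFinset.erase y).erase z).card = 2 := by
    rw [Finset.card_erase_of_mem hz, Finset.card_erase_of_mem hy, hcardx]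
  obtain ⟨u, w, huw, hr⟩ := Finset.card_eq_two.mp hcard2
  have hu : u ∈ ((hlf x).toFinset.erase y).erase z := by rw [hr]; simp
  have hw : w ∈ ((hlf x).toFinset.erase y).erase z := by rw [hr]; simp
  have hxu : G.Adj x u := by
    have := (Finset.mem_erase.mp (Finset.mem_erase.mp hu).2).2
    simpa [(hlf x).mem_toFinset] using this
  have hxw : G.Adj x w := by
    have := (Finset.mem_erase.mp (Finset.mem_erase.mp hw).2).2
    simpa [(hlf x).mem_toFinset] using this
  have huz : u ≠ z := (Finset.mem_erase.mp hu).1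
  have huy : u ≠ y := (Finset.mem_erase.mp (Finset.mem_erase.mp hu).2).1
  have hwz : w ≠ z := (Finset.mem_erase.mp hw).1
  have hwy : w ≠ y := (Finset.mem_erase.mp (Finset.mem_erase.mp hw).2).1
  have hux : u ≠ x := hxu.ne'
  have hwx : w ≠ x := hxw.ne'
  have hsx : (hlf x).toFinset = {y, z, u, w} := by
    have h1 := Finset.insert_erase hz
    have h2 := Finset.insert_erase hy
    rw [← h2, ← h1, hr]
  have hadjx : ∀ s : V, G.Adj x s ↔ s = y ∨ s = z ∨ s = u ∨ s = w := by
    intro s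
    rw [← SimpleGraph.mem_neighborSet, ← (hlf x).mem_toFinset, hsx]
    simp
  have hxzne : x ≠ z := hxz.ne
  have hsuby : ({x, z} : Finset V) ⊆ (hlf y).toFinset := by
    intro a ha
    simp only [Finset.mem_insert, Finset.mem_singleton] at ha
    rcases ha with rfl | rfl <;> simp [(hlf y).mem_toFinset, hxy.symm, hyz]
  have hcardy : (hlf y).toFinset.card = 2 := by
    rw [← Set.ncard_eq_toFinset_card _ (hlf y)]; exact hdy
  have hsy : ({x, z} : Finset V) = (hlf y).toFinset :=
    Finset.eq_of_subset_of_card_le hsuby (by rw [hcardy, Finset.card_pair hxzne])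
  have hadjy : ∀ s : V, G.Adj y s ↔ s = x ∨ s = z := by
    intro s
    rw [← SimpleGraph.mem_neighborSet, ← (hlf y).mem_toFinset, ← hsy]
    simp
  obtain ⟨t, htdef⟩ : ∃ t : ℝ, t = 5*(1-α)/4 := ⟨_, rfl⟩
  have ht0 : 0 ≤ t := by rw [htdef]; linarith
  have ht1 : t ≤ 1 := by rw [htdef]; linarith
  obtain ⟨L, hL⟩ : ∃ L : List (V × V × ℝ),
      L = [(x,x,t/5),(y,y,t/5),(z,z,t/5),(u,x,t/5),(w,z,t/5),(x,y,1-t)] := ⟨_, rfl⟩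
  have hcoup : IsCoupling (mu G α x) (mu G α y) (mix L) := by
    refine ⟨mix_nonneg ?_, ?_, ?_, ?_⟩
    · intro q hq
      rw [hL] at hq
      simp only [List.mem_cons, List.not_mem_nil, or_false] at hq
      rcases hq with rfl | rfl | rfl | rfl | rfl | rfl <;> simp <;> linarith
    · exact ((L.map fun q => (q.1, q.2.1)).toFinset.finite_toSet).subset (mix_pair_support L)
    · intro s
      rw [mix_row, hL]
      simp only [List.map_cons, List.map_nil, List.sum_cons, List.sum_nil, add_zero, mu, hdx]
      by_cases h1 : s = x
      · subst h1
        simp only [if_pos rfl, if_neg hyx.symm, if_neg hxz.ne, if_neg hux.symm, if_neg hwx.symm]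
        norm_num
        linarith
      · by_cases h2 : s = y
        · subst h2
          simp only [if_neg hyx, if_pos rfl, if_neg hzy.symm, if_neg huy.symm, if_neg hwy.symm,
            if_pos hxy]
          norm_num
          linarith
        · by_cases h3 : s = z
          · subst h3
            simp only [if_neg hzx, if_neg hzy, if_pos rfl, if_neg huz.symm, if_neg hwz.symm,
              if_pos hxz]
            norm_num
            linarith
          · by_cases h4 : s = u
            · subst h4
              simp only [if_neg hux, if_neg huy, if_neg huz, if_pos rfl, if_neg huw,
                if_pos hxu]
              norm_num
              linarith
            · by_cases h5 : s = w
              · subst h5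
                simp only [if_neg hwx, if_neg hwy, if_neg hwz, if_neg (Ne.symm huw), if_pos rfl,
                  if_pos hxw]
                norm_num
                linarith
              · have hna : ¬ G.Adj x s := by
                  rw [hadjx s]
                  tauto
                simp [h1, h2, h3, h4, h5, hna]
    · intro v
      rw [mix_col, hL]
      simp only [List.map_cons, List.map_nil, List.sum_cons, List.sum_nil, add_zero, mu, hdy]
      by_cases h1 : v = y
      · subst h1
        simp only [if_neg hyx, if_pos rfl, if_neg hzy.symm]
        norm_num
        linarith
      · by_cases h2 : v = x
        · subst h2
          simp only [if_pos rfl, if_neg hyx.symm, if_neg hzx.symm, if_neg h1,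
            if_pos (hxy.symm)]
          norm_num
          linarith
        · by_cases h3 : v = z
          · subst h3
            simp only [if_neg hzx, if_neg hzy, if_pos rfl, if_neg h1, if_pos hyz]
            norm_num
            linarith
          · have hna : ¬ G.Adj y v := by
              rw [hadjy v]
              tauto
            simp [h1, h2, h3, hna]
  have hdux : (G.dist u x : ℝ) ≤ 1 := by
    have := SimpleGraph.dist_le (hxu.symm.toWalk)
    simp only [SimpleGraph.Walk.length_cons, SimpleGraph.Walk.length_nil] at this
    exact_mod_cast this
  have hdwz : (G.dist w z : ℝ) ≤ 2 := by
    have := SimpleGraph.dist_le (SimpleGraph.Walk.cons hxw.symm hxz.toWalk)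
    simp only [SimpleGraph.Walk.length_cons, SimpleGraph.Walk.length_nil] at this
    exact_mod_cast this
  have hdxy : (G.dist x y : ℝ) ≤ 1 := by
    have := SimpleGraph.dist_le (hxy.toWalk)
    simp only [SimpleGraph.Walk.length_cons, SimpleGraph.Walk.length_nil] at this
    exact_mod_cast this
  have hcost : cost G (mix L) ≤ 1 - (1 - α)/2 := by
    rw [mix_cost, hL]
    simp only [List.map_cons, List.map_nil, List.sum_cons, List.sum_nil, add_zero,
      SimpleGraph.dist_self, Nat.cast_zero, mul_zero, zero_add]
    have h5 : (0:ℝ) ≤ t/5 := by linarith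
    have e1 : t/5 * (G.dist u x : ℝ) ≤ t/5 * 1 := mul_le_mul_of_nonneg_left hdux h5
    have e2 : t/5 * (G.dist w z : ℝ) ≤ t/5 * 2 := mul_le_mul_of_nonneg_left hdwz h5
    have e3 : (1-t) * (G.dist x y : ℝ) ≤ (1-t) * 1 :=
      mul_le_mul_of_nonneg_left hdxy (by linarith)
    rw [htdef] at *
    linarith
  have hbdd : BddBelow {c : ℝ | ∃ A, IsCoupling (mu G α x) (mu G α y) A ∧ c = cost G A} := by
    refine ⟨0, ?_⟩
    rintro c ⟨A, hA, rfl⟩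
    exact finsum_nonneg fun p => mul_nonneg (hA.1 _ _) (Nat.cast_nonneg _)
  have hWle : W G (mu G α x) (mu G α y) ≤ cost G (mix L) :=
    csInf_le hbdd ⟨mix L, hcoup, rfl⟩
  linarith


/-- an edge with endpoint degrees 4 and 2 lying in a triangle has
`W(μ_x^{1/5}, μ_y^{1/5}) < 1`, so `k_{1/5}(x,y) > 0`; hence the graph is not Ricci-flat. -/
theorem W_lt_one_deg42_triangle (G : SimpleGraph V) (hG : G.Connected) (hlf : LocFin G)
    (x y z : V) (hxy : G.Adj x y) (hdx : deg G x = 4) (hdy : deg G y = 2)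
    (hxz : G.Adj x z) (hyz : G.Adj y z) :
    W G (mu G (1/5) x) (mu G (1/5) y) < 1 ∧ 0 < kIdle G (1/5) x y ∧ ¬ RicciFlat G := by
  have key : ∀ α : ℝ, 1/5 ≤ α → α ≤ 1 →
      W G (mu G α x) (mu G α y) ≤ 1 - (1 - α)/2 := fun α h1 h2 =>
    W_le_key G hG hlf x y z hxy hdx hdy hxz hyz h1 h2
  have h15 := key (1/5) le_rfl (by norm_num)
  have hW : W G (mu G (1/5) x) (mu G (1/5) y) < 1 := by linarith
  have hk : 0 < kIdle G (1/5) x y := by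
    rw [kIdle]
    linarith
  refine ⟨hW, hk, ?_⟩
  intro hRF
  have h := hRF x y hxy
  have hev2 : ∀ᶠ a in nhdsWithin (1:ℝ) (Set.Iio 1),
      kIdle G a x y / (1 - a) < 1/2 :=
    h.eventually_lt_const (by norm_num : (0:ℝ) < 1/2)
  have hmem : Set.Ioo (1/5 : ℝ) 1 ∈ nhdsWithin (1:ℝ) (Set.Iio 1) :=
    Ioo_mem_nhdsLT_of_mem ⟨by norm_num, le_rfl⟩
  have hev1 : ∀ᶠ a in nhdsWithin (1:ℝ) (Set.Iio 1), a ∈ Set.Ioo (1/5 : ℝ) 1 :=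
    Filter.eventually_iff.mpr hmem
  obtain ⟨a, ha1, ha2⟩ := (hev1.and hev2).exists
  obtain ⟨hag, hal⟩ := ha1
  have hka : 1 - (1 - (1 - a)/2) ≤ kIdle G a x y := by
    have := key a (le_of_lt hag) (le_of_lt hal)
    rw [kIdle]
    linarith
  have hpos : (0:ℝ) < 1 - a := by linarith
  have : (1:ℝ)/2 ≤ kIdle G a x y / (1 - a) := by
    rw [le_div_iff₀ hpos]
    linarith
  linarith
end RicciFlatPaper
end
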